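/- arXiv:1303.0615 — 4 statements merged into one kernel-verified Lean document; each statement's English description precedes it below -/
import Mathlib

section
/- In the RIFS interpolation setup with matching conditions, let C(I) = {φ ∈ C⁰(I) : φ(x_i) = y_i, i = 0, 1, …, n}, a complete metric space under the sup norm. Then the operator T : C(I) → C(I) defined by (Tφ)(x) = F_{i,k}(L_{i,k}^{−1}(x), φ(L_{i,k}^{−1}(x))) for x ∈ I_i (i = 1, …, n, k = γ(i)) is well defined (i.e., Tφ is continuous and interpolates the data) and is a contraction on C(I). -/
/-!
On each region `I_i` the operator is the piece `t ↦ F_i(L_i⁻¹ t, φ(L_i⁻¹ t))`, and `T φ` glues these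
pieces. If `φ` interpolates the data, the matching conditions force the piece on `I_i` to take the
values `y_{i-1}` and `y_i` at the ends of `I_i`, so adjacent pieces agree at the common knot: `T φ`
is well defined, interpolates, and is continuous because each piece is (`L_i⁻¹` is continuous,
being the inverse of a continuous bijection between compact intervals). For two such `φ`, `ψ`
the pieces differ only in `s_i(t) (a(φ u) - a(ψ u))` with `u = L_i⁻¹ t`, which gives the
contraction factor `max_i sup_{I_i} |s_i| · L_a < 1`.
-/

open Set

section Topology

variable {X Y : Type*} [TopologicalSpace X] [TopologicalSpace Y]

theorem ContinuousOn.continuousOn_of_invOn_of_isCompact [T2Space Y] {f : X → Y} {g : Y → X}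
    {s : Set X} {t : Set Y} (hf : ContinuousOn f s) (hs : IsCompact s) (hg : MapsTo g t s)
    (hfg : InvOn g f s t) : ContinuousOn g t := by
  -- within `t`, the preimage under `g` of a closed set `C` is the compact set `f '' (C ∩ s)`
  refine continuousOn_iff_isClosed.2 fun C hC =>
    ⟨f '' (C ∩ s), ((hs.inter_left hC).image_of_continuousOn
      (hf.mono inter_subset_right)).isClosed, ?_⟩
  ext u
  constructor
  · rintro ⟨huC, hu⟩
    exact ⟨⟨g u, ⟨huC, hg hu⟩, hfg.2 hu⟩, hu⟩
  · rintro ⟨⟨v, ⟨hvC, hv⟩, rfl⟩, hu⟩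
    exact ⟨show g (f v) ∈ C by rwa [hfg.1 hv], hu⟩

theorem abs_sub_le_sSup_abs_sub {s : Set X} {φ ψ : X → ℝ} (hs : IsCompact s)
    (hφ : ContinuousOn φ s) (hψ : ContinuousOn ψ s) {u : X} (hu : u ∈ s) :
    |φ u - ψ u| ≤ sSup {d : ℝ | ∃ v ∈ s, d = |φ v - ψ v|} := by
  have himage : {d : ℝ | ∃ v ∈ s, d = |φ v - ψ v|} = (fun v => |φ v - ψ v|) '' s := by
    ext; simp [eq_comm]
  rw [himage]
  exact le_csSup (hs.image_of_continuousOn (hφ.sub hψ).abs).bddAbove (mem_image_of_mem _ hu)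

end Topology

theorem continuousOn_of_abs_sub_le_mul {f : ℝ → ℝ} {s : Set ℝ} {K : ℝ}
    (h : ∀ u ∈ s, ∀ v ∈ s, |f u - f v| ≤ K * |u - v|) : ContinuousOn f s :=
  (LipschitzOnWith.of_dist_le' (K := K) (by simpa only [Real.dist_eq] using h)).continuousOn

theorem exists_uniform_lt_one {n : ℕ} {P : ℕ → ℝ → Prop}
    (hP : ∀ i c c', c ≤ c' → P i c → P i c') (h : ∀ i, 1 ≤ i → i ≤ n → ∃ c < 1, P i c) :
    ∃ c, 0 ≤ c ∧ c < 1 ∧ ∀ i, 1 ≤ i → i ≤ n → P i c := by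
  induction n with
  | zero => exact ⟨0, le_rfl, zero_lt_one, fun i h1 h2 => by omega⟩
  | succ m ih =>
    obtain ⟨c, hc0, hc1, hc⟩ := ih fun i h1 h2 => h i h1 (by omega)
    obtain ⟨c', hc'1, hc'⟩ := h (m + 1) (by omega) le_rfl
    refine ⟨max c c', le_max_of_le_left hc0, max_lt hc1 hc'1, fun i h1 h2 => ?_⟩
    rcases eq_or_lt_of_le h2 with rfl | h2
    · exact hP _ _ _ (le_max_right _ _) hc'
    · exact hP _ _ _ (le_max_left _ _) (hc i h1 (by omega))

section Knots

variable {α β : Type*} [LinearOrder α] {x : ℕ → α} {n : ℕ}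

theorem Icc_subset_Icc_of_monotoneOn (hx : MonotoneOn x (Iic n)) {p q : ℕ} (hpq : p ≤ q)
    (hq : q ≤ n) : Icc (x p) (x q) ⊆ Icc (x 0) (x n) :=
  Icc_subset_Icc (hx (by simp) (by simp; omega) (Nat.zero_le p))
    (hx (by simpa using hq) (by simp) hq)

theorem continuousOn_Icc_of_forall_Icc_pred [TopologicalSpace α] [OrderClosedTopology α]
    [TopologicalSpace β] {f : α → β} (hx : MonotoneOn x (Iic n))
    (hf : ∀ i, 1 ≤ i → i ≤ n → ContinuousOn f (Icc (x (i - 1)) (x i))) :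
    ContinuousOn f (Icc (x 0) (x n)) := by
  induction n with
  | zero => simp [continuousOn_singleton]
  | succ m ih =>
    rw [← Icc_union_Icc_eq_Icc (hx (by simp) (by simp) (Nat.zero_le m))
      (hx (by simp) (by simp) m.le_succ)]
    have hinit := ih (hx.mono (Iic_subset_Iic.2 m.le_succ)) fun i h1 h2 => hf i h1 (by omega)
    exact hinit.union_of_isClosed (by simpa using hf (m + 1) (by omega) le_rfl)
      isClosed_Icc isClosed_Icc

theorem eq_knot_of_mem_Icc_of_mem_Icc (hx : StrictMonoOn x (Iic n)) {i j : ℕ} {t : α}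
    (hij : i < j) (hj : j ≤ n) (hti : t ∈ Icc (x (i - 1)) (x i))
    (htj : t ∈ Icc (x (j - 1)) (x j)) : j - 1 = i ∧ t = x i := by
  have hle : x i ≤ x (j - 1) := hx.monotoneOn (by simp; omega) (by simp; omega) (by omega)
  have ht : t = x i := le_antisymm hti.2 (hle.trans htj.1)
  exact ⟨hx.injOn (by simp; omega) (by simp; omega) (le_antisymm (htj.1.trans ht.le) hle), ht⟩

-- the least `m ≥ 1` with `t ≤ x m` (junk value `0` if there is none)
noncomputable def regionIndex (x : ℕ → α) (t : α) : ℕ := sInf {m | 1 ≤ m ∧ t ≤ x m}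

theorem regionIndex_spec (hn : 0 < n) {t : α} (ht : t ∈ Icc (x 0) (x n)) :
    1 ≤ regionIndex x t ∧ regionIndex x t ≤ n ∧
      t ∈ Icc (x (regionIndex x t - 1)) (x (regionIndex x t)) := by
  have hnS : n ∈ {m | 1 ≤ m ∧ t ≤ x m} := ⟨hn, ht.2⟩
  obtain ⟨h1, htj⟩ : regionIndex x t ∈ {m | 1 ≤ m ∧ t ≤ x m} := csInf_mem ⟨n, hnS⟩
  refine ⟨h1, csInf_le (OrderBot.bddBelow _) hnS, ?_, htj⟩
  rcases eq_or_lt_of_le h1 with h | h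
  · simpa [← h] using ht.1
  · have hprev : regionIndex x t - 1 ∉ {m | 1 ≤ m ∧ t ≤ x m} :=
      notMem_of_lt_csInf (Nat.sub_one_lt (by omega)) (OrderBot.bddBelow _)
    exact (not_le.1 fun hle => hprev ⟨by omega, hle⟩).le

noncomputable def glue (x : ℕ → α) (g : ℕ → α → β) (t : α) : β := g (regionIndex x t) t

variable {y : ℕ → β} {g : ℕ → α → β}

theorem glue_eqOn (hx : StrictMonoOn x (Iic n))
    (hg : ∀ i, 1 ≤ i → i ≤ n → g i (x (i - 1)) = y (i - 1) ∧ g i (x i) = y i)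
    {i : ℕ} (hi1 : 1 ≤ i) (hin : i ≤ n) : EqOn (glue x g) (g i) (Icc (x (i - 1)) (x i)) := by
  intro t ht
  obtain ⟨hj1, hjn, htj⟩ :=
    regionIndex_spec (by omega) (Icc_subset_Icc_of_monotoneOn hx.monotoneOn (i.sub_le 1) hin ht)
  change g (regionIndex x t) t = g i t
  generalize regionIndex x t = j at hj1 hjn htj ⊢
  -- two distinct regions meet only at a knot, where both pieces take the prescribed value
  rcases lt_trichotomy i j with hij | rfl | hji
  · obtain ⟨hj, rfl⟩ := eq_knot_of_mem_Icc_of_mem_Icc hx hij hjn ht htj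
    rw [← hj, (hg j hj1 hjn).1, hj, (hg i hi1 hin).2]
  · rfl
  · obtain ⟨hi, rfl⟩ := eq_knot_of_mem_Icc_of_mem_Icc hx hji hin htj ht
    rw [← hi, (hg i hi1 hin).1, hi, (hg j hj1 hjn).2]

theorem glue_apply_knot (hx : StrictMonoOn x (Iic n))
    (hg : ∀ i, 1 ≤ i → i ≤ n → g i (x (i - 1)) = y (i - 1) ∧ g i (x i) = y i)
    (hn : 0 < n) {m : ℕ} (hm : m ≤ n) : glue x g (x m) = y m := by
  rcases Nat.eq_zero_or_pos m with rfl | hm0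
  · rw [glue_eqOn hx hg le_rfl hn ⟨le_rfl, hx.monotoneOn (by simp) (by simp; omega) zero_le_one⟩]
    exact (hg 1 le_rfl hn).1
  · rw [glue_eqOn hx hg hm0 hm
      ⟨hx.monotoneOn (by simp; omega) (by simpa using hm) (m.sub_le 1), le_rfl⟩]
    exact (hg m hm0 hm).2

theorem continuousOn_glue [TopologicalSpace α] [OrderClosedTopology α] [TopologicalSpace β]
    (hx : StrictMonoOn x (Iic n))
    (hg : ∀ i, 1 ≤ i → i ≤ n → g i (x (i - 1)) = y (i - 1) ∧ g i (x i) = y i)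
    (hgc : ∀ i, 1 ≤ i → i ≤ n → ContinuousOn (g i) (Icc (x (i - 1)) (x i))) :
    ContinuousOn (glue x g) (Icc (x 0) (x n)) :=
  continuousOn_Icc_of_forall_Icc_pred hx.monotoneOn fun i h1 h2 =>
    (hgc i h1 h2).congr (glue_eqOn hx hg h1 h2)

end Knots

section RIFS

variable {σ L Linv b a φ : ℝ → ℝ}

-- `F_{i,k}(u, v)`, with `σ = s_{i,k}`, `L = L_{i,k}`, `b = b_{i,k}`
noncomputable def rifsMap (σ L b a : ℝ → ℝ) (u v : ℝ) : ℝ := σ (L u) * a v + b u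

theorem abs_rifsMap_sub_le {La : ℝ} (ha : ∀ v w, |a v - a w| ≤ La * |v - w|) (u v w : ℝ) :
    |rifsMap σ L b a u v - rifsMap σ L b a u w| ≤ |σ (L u)| * La * |v - w| := by
  calc |rifsMap σ L b a u v - rifsMap σ L b a u w| = |σ (L u)| * |a v - a w| := by
        rw [rifsMap, rifsMap, ← abs_mul]; ring_nf
    _ ≤ |σ (L u)| * La * |v - w| := by
        rw [mul_assoc]; exact mul_le_mul_of_nonneg_left (ha v w) (abs_nonneg _)

theorem continuousOn_rifsMap_comp_inv {s t : Set ℝ} (hs : IsCompact s) (hL : ContinuousOn L s)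
    (hLinv : MapsTo Linv t s) (hinv : InvOn Linv L s t) (hσ : ContinuousOn σ t)
    (ha : Continuous a) (hb : ContinuousOn b s) (hφ : ContinuousOn φ s) :
    ContinuousOn (fun u => rifsMap σ L b a (Linv u) (φ (Linv u))) t := by
  have hLinvc := hL.continuousOn_of_invOn_of_isCompact hs hLinv hinv
  refine ((hσ.mul (ha.comp_continuousOn (hφ.comp hLinvc hLinv))).add
    (hb.comp hLinvc hLinv)).congr fun u hu => ?_
  simp only [rifsMap, hinv.2 hu, Pi.add_apply, Pi.mul_apply, Function.comp_apply]

theorem rifsMap_comp_inv_eq_of_matching {x y : ℕ → ℝ} {A B : Set ℕ}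
    (hLend : L '' (x '' A) = x '' B) (hLinv : LeftInvOn Linv L (x '' A))
    (hφ : ∀ α ∈ A, φ (x α) = y α)
    (hmatch : ∀ α ∈ A, ∀ β ∈ B, L (x α) = x β → σ (x β) * a (y α) + b (x α) = y β) :
    ∀ β ∈ B, rifsMap σ L b a (Linv (x β)) (φ (Linv (x β))) = y β := by
  intro β hβ
  obtain ⟨_, ⟨α, hα, rfl⟩, hLα⟩ : x β ∈ L '' (x '' A) := hLend ▸ mem_image_of_mem x hβ
  rw [← hLα, hLinv (mem_image_of_mem x hα), hφ α hα, rifsMap, hLα]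
  exact hmatch α hα β hβ hLα

theorem rifsMap_comp_inv_knots {x y : ℕ → ℝ} {n p q j k : ℕ} (hx : MonotoneOn x (Iic n))
    (hpq : p ≤ q) (hq : q ≤ n) (hφ : ∀ m ≤ n, φ (x m) = y m)
    (hLend : L '' {x p, x q} = {x j, x k}) (hLinv : LeftInvOn Linv L (Icc (x p) (x q)))
    (hmatch : ∀ α ∈ ({p, q} : Set ℕ), ∀ β ∈ ({j, k} : Set ℕ), L (x α) = x β →
      σ (x β) * a (y α) + b (x α) = y β) :
    rifsMap σ L b a (Linv (x j)) (φ (Linv (x j))) = y j ∧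
      rifsMap σ L b a (Linv (x k)) (φ (Linv (x k))) = y k := by
  have hxpq : x p ≤ x q := hx (by simp; omega) (by simpa) hpq
  have hvalue := rifsMap_comp_inv_eq_of_matching (by simpa only [image_pair] using hLend)
    (hLinv.mono (by
      rw [image_pair]; exact pair_subset (left_mem_Icc.2 hxpq) (right_mem_Icc.2 hxpq)))
    (fun α hα => hφ α (by rcases hα with rfl | rfl <;> omega)) hmatch
  exact ⟨hvalue j (by simp), hvalue k (by simp)⟩

end RIFS

noncomputable def rbOperator (x : ℕ → ℝ) (L Linv b sfun : ℕ → ℝ → ℝ) (a φ : ℝ → ℝ) : ℝ → ℝ :=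
  glue x fun i t => rifsMap (sfun i) (L i) (b i) a (Linv i t) (φ (Linv i t))

theorem abs_rbOperator_sub_le {n : ℕ} {x : ℕ → ℝ} {L Linv b sfun : ℕ → ℝ → ℝ} {a φ ψ : ℝ → ℝ}
    {La c : ℝ} (hn : 0 < n)
    (hLinv : ∀ i, 1 ≤ i → i ≤ n → MapsTo (Linv i) (Icc (x (i - 1)) (x i)) (Icc (x 0) (x n)) ∧
      ∀ t ∈ Icc (x (i - 1)) (x i), L i (Linv i t) = t)
    (ha : ∀ u v, |a u - a v| ≤ La * |u - v|)
    (hc : ∀ i, 1 ≤ i → i ≤ n → ∀ u ∈ Icc (x (i - 1)) (x i), |sfun i u| * La ≤ c) (hc0 : 0 ≤ c)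
    (hφ : ContinuousOn φ (Icc (x 0) (x n))) (hψ : ContinuousOn ψ (Icc (x 0) (x n)))
    {t : ℝ} (ht : t ∈ Icc (x 0) (x n)) :
    |rbOperator x L Linv b sfun a φ t - rbOperator x L Linv b sfun a ψ t| ≤
      c * sSup {d : ℝ | ∃ u ∈ Icc (x 0) (x n), d = |φ u - ψ u|} := by
  obtain ⟨hj1, hjn, htj⟩ := regionIndex_spec hn ht
  obtain ⟨hmaps, hright⟩ := hLinv _ hj1 hjn
  calc |rbOperator x L Linv b sfun a φ t - rbOperator x L Linv b sfun a ψ t|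
      ≤ |sfun _ (L _ (Linv _ t))| * La * |φ (Linv _ t) - ψ (Linv _ t)| :=
        abs_rifsMap_sub_le ha _ _ _
    _ ≤ c * sSup {d : ℝ | ∃ u ∈ Icc (x 0) (x n), d = |φ u - ψ u|} :=
        mul_le_mul (hc _ hj1 hjn _ (by rwa [hright t htj]))
          (abs_sub_le_sSup_abs_sub isCompact_Icc hφ hψ (hmaps htj)) (abs_nonneg _) hc0

theorem stmt1_general
    -- the data set P: x 0 < x 1 < … < x n, points (x i, y i)
    (n l : ℕ) (hn : 0 < n)
    (x y : ℕ → ℝ) (hx : ∀ i < n, x i < x (i + 1))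
    -- domains Ĩ_k = [x (s k), x (e k)], with e k − s k ≥ 2
    (s e : ℕ → ℕ)
    (hse : ∀ k, 1 ≤ k → k ≤ l → s k + 2 ≤ e k ∧ e k ≤ n)
    -- each region I_i is related to the domain Ĩ_(γ i)
    (γ : ℕ → ℕ) (hγ : ∀ i, 1 ≤ i → i ≤ n → 1 ≤ γ i ∧ γ i ≤ l)
    (L Linv b sfun : ℕ → ℝ → ℝ) (a : ℝ → ℝ)
    -- L i : Ĩ_(γ i) → I_i is a contraction homeomorphism mapping endpoints onto endpoints,
    -- with inverse Linv i
    (hLend : ∀ i, 1 ≤ i → i ≤ n →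
      (L i) '' {x (s (γ i)), x (e (γ i))} = {x (i - 1), x i})
    (hLcon : ∀ i, 1 ≤ i → i ≤ n → ∃ c : ℝ, 0 ≤ c ∧ c < 1 ∧
      ∀ u ∈ Icc (x (s (γ i))) (x (e (γ i))),
      ∀ v ∈ Icc (x (s (γ i))) (x (e (γ i))), |L i u - L i v| ≤ c * |u - v|)
    (hLinv : ∀ i, 1 ≤ i → i ≤ n →
      (MapsTo (Linv i) (Icc (x (i - 1)) (x i)) (Icc (x (s (γ i))) (x (e (γ i)))) ∧
       (∀ t ∈ Icc (x (i - 1)) (x i), L i (Linv i t) = t) ∧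
       (∀ u ∈ Icc (x (s (γ i))) (x (e (γ i))), Linv i (L i u) = u)))
    -- a is Lipschitz with constant La, fixing the interpolation values over domain endpoints
    (La : ℝ) (hLa0 : 0 ≤ La)
    (ha : ∀ u v : ℝ, |a u - a v| ≤ La * |u - v|)
    -- b i is Lipschitz on Ĩ_(γ i)
    (hb : ∀ i, 1 ≤ i → i ≤ n → ∃ K : ℝ, 0 ≤ K ∧
      ∀ u ∈ Icc (x (s (γ i))) (x (e (γ i))),
      ∀ v ∈ Icc (x (s (γ i))) (x (e (γ i))), |b i u - b i v| ≤ K * |u - v|)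
    -- sfun i is a contraction on I_i with sup_{I_i} |sfun i| · La < 1
    (hscon : ∀ i, 1 ≤ i → i ≤ n → ∃ c : ℝ, 0 ≤ c ∧ c < 1 ∧
      ∀ u ∈ Icc (x (i - 1)) (x i), ∀ v ∈ Icc (x (i - 1)) (x i),
        |sfun i u - sfun i v| ≤ c * |u - v|)
    (hsLa : ∀ i, 1 ≤ i → i ≤ n → ∃ sb : ℝ,
      (∀ u ∈ Icc (x (i - 1)) (x i), |sfun i u| ≤ sb) ∧ sb * La < 1)
    -- matching conditions: F_{i,k}(x_α, y_α) = y_β whenever L_{i,k}(x_α) = x_β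
    (hmatch : ∀ i, 1 ≤ i → i ≤ n → ∀ α ∈ ({s (γ i), e (γ i)} : Set ℕ),
      ∀ β ∈ ({i - 1, i} : Set ℕ), L i (x α) = x β →
        sfun i (x β) * a (y α) + b i (x α) = y β) :
    -- conclusion: T is well defined on C(I) and is a contraction there
    ∃ T : (ℝ → ℝ) → (ℝ → ℝ),
      (∀ φ : ℝ → ℝ,
        (ContinuousOn φ (Icc (x 0) (x n)) ∧ ∀ i ≤ n, φ (x i) = y i) →
        ((∀ i, 1 ≤ i → i ≤ n → ∀ t ∈ Icc (x (i - 1)) (x i),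
            T φ t = sfun i (L i (Linv i t)) * a (φ (Linv i t)) + b i (Linv i t)) ∧
         (ContinuousOn (T φ) (Icc (x 0) (x n)) ∧ ∀ i ≤ n, T φ (x i) = y i))) ∧
      (∃ c : ℝ, 0 ≤ c ∧ c < 1 ∧ ∀ φ ψ : ℝ → ℝ,
        (ContinuousOn φ (Icc (x 0) (x n)) ∧ ∀ i ≤ n, φ (x i) = y i) →
        (ContinuousOn ψ (Icc (x 0) (x n)) ∧ ∀ i ≤ n, ψ (x i) = y i) →
        ∀ t ∈ Icc (x 0) (x n),
          |T φ t - T ψ t| ≤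
            c * sSup {d : ℝ | ∃ u ∈ Icc (x 0) (x n), d = |φ u - ψ u|}) := by
  have hxs : StrictMonoOn x (Iic n) := strictMonoOn_Iic_of_lt_succ hx
  have hdom : ∀ i, 1 ≤ i → i ≤ n → s (γ i) ≤ e (γ i) ∧ e (γ i) ≤ n := fun i h1 h2 => by
    have := hse (γ i) (hγ i h1 h2).1 (hγ i h1 h2).2; omega
  have hdomI : ∀ i, 1 ≤ i → i ≤ n → Icc (x (s (γ i))) (x (e (γ i))) ⊆ Icc (x 0) (x n) :=
    fun i h1 h2 => Icc_subset_Icc_of_monotoneOn hxs.monotoneOn (hdom i h1 h2).1 (hdom i h1 h2).2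
  have hinv : ∀ i, 1 ≤ i → i ≤ n →
      InvOn (Linv i) (L i) (Icc (x (s (γ i))) (x (e (γ i)))) (Icc (x (i - 1)) (x i)) :=
    fun i h1 h2 => ⟨(hLinv i h1 h2).2.2, (hLinv i h1 h2).2.1⟩
  have hknot : ∀ φ : ℝ → ℝ, (∀ j ≤ n, φ (x j) = y j) → ∀ i, 1 ≤ i → i ≤ n →
      rifsMap (sfun i) (L i) (b i) a (Linv i (x (i - 1))) (φ (Linv i (x (i - 1)))) = y (i - 1) ∧
      rifsMap (sfun i) (L i) (b i) a (Linv i (x i)) (φ (Linv i (x i))) = y i :=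
    fun φ hφ i h1 h2 => rifsMap_comp_inv_knots hxs.monotoneOn (hdom i h1 h2).1 (hdom i h1 h2).2
      hφ (hLend i h1 h2) (hinv i h1 h2).1 (hmatch i h1 h2)
  have hcont : ∀ φ : ℝ → ℝ, ContinuousOn φ (Icc (x 0) (x n)) → ∀ i, 1 ≤ i → i ≤ n →
      ContinuousOn (fun t => rifsMap (sfun i) (L i) (b i) a (Linv i t) (φ (Linv i t)))
        (Icc (x (i - 1)) (x i)) := fun φ hφ i h1 h2 => by
    obtain ⟨cL, -, -, hcL⟩ := hLcon i h1 h2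
    obtain ⟨cs, -, -, hcs⟩ := hscon i h1 h2
    obtain ⟨K, -, hK⟩ := hb i h1 h2
    exact continuousOn_rifsMap_comp_inv isCompact_Icc (continuousOn_of_abs_sub_le_mul hcL)
      (hLinv i h1 h2).1 (hinv i h1 h2) (continuousOn_of_abs_sub_le_mul hcs)
      (continuousOn_univ.1 (continuousOn_of_abs_sub_le_mul fun u _ v _ => ha u v))
      (continuousOn_of_abs_sub_le_mul hK) (hφ.mono (hdomI i h1 h2))
  obtain ⟨c, hc0, hc1, hc⟩ := exists_uniform_lt_one
    (P := fun i c => ∀ u ∈ Icc (x (i - 1)) (x i), |sfun i u| * La ≤ c)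
    (fun _ _ _ hcc' hc u hu => (hc u hu).trans hcc') fun i h1 h2 =>
      let ⟨sb, hsb, hsbLa⟩ := hsLa i h1 h2
      ⟨sb * La, hsbLa, fun u hu => mul_le_mul_of_nonneg_right (hsb u hu) hLa0⟩
  refine ⟨rbOperator x L Linv b sfun a, fun φ ⟨hφc, hφy⟩ =>
    ⟨fun i h1 h2 _ ht => glue_eqOn hxs (hknot φ hφy) h1 h2 ht,
      continuousOn_glue hxs (hknot φ hφy) (hcont φ hφc),
      fun _ hm => glue_apply_knot hxs (hknot φ hφy) hn hm⟩, c, hc0, hc1, ?_⟩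
  exact fun φ ψ ⟨hφc, _⟩ ⟨hψc, _⟩ t ht => abs_rbOperator_sub_le hn
    (fun i h1 h2 => ⟨(hLinv i h1 h2).1.mono_right (hdomI i h1 h2), (hLinv i h1 h2).2.1⟩)
    ha hc hc0 hφc hψc ht

/-- **Well-definedness and contractivity of the Read–Bajraktarević operator.**
In the RIFS interpolation setup with matching conditions, the operator
`(Tφ)(x) = F_{i,k}(L_{i,k}⁻¹(x), φ(L_{i,k}⁻¹(x)))` for `x ∈ I_i` is a well-defined
contraction on `C(I) = {φ ∈ C⁰(I) : φ(x_i) = y_i}` with the sup norm. -/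
theorem stmt1
    -- the data set P: x 0 < x 1 < … < x n, points (x i, y i)
    (n l : ℕ) (hn : 0 < n) (hl : 0 < l)
    (x y : ℕ → ℝ) (hx : ∀ i < n, x i < x (i + 1))
    -- domains Ĩ_k = [x (s k), x (e k)], with e k − s k ≥ 2
    (s e : ℕ → ℕ)
    (hse : ∀ k, 1 ≤ k → k ≤ l → s k + 2 ≤ e k ∧ e k ≤ n)
    -- each region I_i is related to the domain Ĩ_(γ i)
    (γ : ℕ → ℕ) (hγ : ∀ i, 1 ≤ i → i ≤ n → 1 ≤ γ i ∧ γ i ≤ l)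
    -- H is a (sufficiently large) interval containing all the y i
    (H0 H1 : ℝ) (hH01 : H0 ≤ H1) (hH : ∀ i ≤ n, y i ∈ Icc H0 H1)
    (L Linv b sfun : ℕ → ℝ → ℝ) (a : ℝ → ℝ)
    -- L i : Ĩ_(γ i) → I_i is a contraction homeomorphism mapping endpoints onto endpoints,
    -- with inverse Linv i
    (hLmap : ∀ i, 1 ≤ i → i ≤ n →
      MapsTo (L i) (Icc (x (s (γ i))) (x (e (γ i)))) (Icc (x (i - 1)) (x i)))
    (hLend : ∀ i, 1 ≤ i → i ≤ n →
      (L i) '' {x (s (γ i)), x (e (γ i))} = {x (i - 1), x i})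
    (hLcon : ∀ i, 1 ≤ i → i ≤ n → ∃ c : ℝ, 0 ≤ c ∧ c < 1 ∧
      ∀ u ∈ Icc (x (s (γ i))) (x (e (γ i))),
      ∀ v ∈ Icc (x (s (γ i))) (x (e (γ i))), |L i u - L i v| ≤ c * |u - v|)
    (hLinv : ∀ i, 1 ≤ i → i ≤ n →
      (MapsTo (Linv i) (Icc (x (i - 1)) (x i)) (Icc (x (s (γ i))) (x (e (γ i)))) ∧
       (∀ t ∈ Icc (x (i - 1)) (x i), L i (Linv i t) = t) ∧
       (∀ u ∈ Icc (x (s (γ i))) (x (e (γ i))), Linv i (L i u) = u)))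
    -- a is Lipschitz with constant La, fixing the interpolation values over domain endpoints
    (La : ℝ) (hLa0 : 0 ≤ La)
    (ha : ∀ u v : ℝ, |a u - a v| ≤ La * |u - v|)
    (hafix : ∀ k, 1 ≤ k → k ≤ l → a (y (s k)) = y (s k) ∧ a (y (e k)) = y (e k))
    -- b i is Lipschitz on Ĩ_(γ i)
    (hb : ∀ i, 1 ≤ i → i ≤ n → ∃ K : ℝ, 0 ≤ K ∧
      ∀ u ∈ Icc (x (s (γ i))) (x (e (γ i))),
      ∀ v ∈ Icc (x (s (γ i))) (x (e (γ i))), |b i u - b i v| ≤ K * |u - v|)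
    -- sfun i is a contraction on I_i with sup_{I_i} |sfun i| · La < 1
    (hscon : ∀ i, 1 ≤ i → i ≤ n → ∃ c : ℝ, 0 ≤ c ∧ c < 1 ∧
      ∀ u ∈ Icc (x (i - 1)) (x i), ∀ v ∈ Icc (x (i - 1)) (x i),
        |sfun i u - sfun i v| ≤ c * |u - v|)
    (hsLa : ∀ i, 1 ≤ i → i ≤ n → ∃ sb : ℝ,
      (∀ u ∈ Icc (x (i - 1)) (x i), |sfun i u| ≤ sb) ∧ sb * La < 1)
    -- matching conditions: F_{i,k}(x_α, y_α) = y_β whenever L_{i,k}(x_α) = x_β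
    (hmatch : ∀ i, 1 ≤ i → i ≤ n → ∀ α ∈ ({s (γ i), e (γ i)} : Set ℕ),
      ∀ β ∈ ({i - 1, i} : Set ℕ), L i (x α) = x β →
        sfun i (x β) * a (y α) + b i (x α) = y β) :
    -- conclusion: T is well defined on C(I) and is a contraction there
    ∃ T : (ℝ → ℝ) → (ℝ → ℝ),
      (∀ φ : ℝ → ℝ,
        (ContinuousOn φ (Icc (x 0) (x n)) ∧ ∀ i ≤ n, φ (x i) = y i) →
        ((∀ i, 1 ≤ i → i ≤ n → ∀ t ∈ Icc (x (i - 1)) (x i),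
            T φ t = sfun i (L i (Linv i t)) * a (φ (Linv i t)) + b i (Linv i t)) ∧
         (ContinuousOn (T φ) (Icc (x 0) (x n)) ∧ ∀ i ≤ n, T φ (x i) = y i))) ∧
      (∃ c : ℝ, 0 ≤ c ∧ c < 1 ∧ ∀ φ ψ : ℝ → ℝ,
        (ContinuousOn φ (Icc (x 0) (x n)) ∧ ∀ i ≤ n, φ (x i) = y i) →
        (ContinuousOn ψ (Icc (x 0) (x n)) ∧ ∀ i ≤ n, ψ (x i) = y i) →
        ∀ t ∈ Icc (x 0) (x n),
          |T φ t - T ψ t| ≤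
            c * sSup {d : ℝ | ∃ u ∈ Icc (x 0) (x n), d = |φ u - ψ u|}) :=
  stmt1_general n l hn x y hx s e hse γ hγ L Linv b sfun a hLend hLcon hLinv La hLa0 ha hb hscon
    hsLa hmatch
end

section
/- (Lemma 5) Let I be an interval in R, L : I → I a contraction homeomorphism, a, b : R → R Lipschitz functions with Lipschitz constants L_a, L_b, and s : I → R a contraction with contraction constant c_s satisfying |s(x)| L_a < 1 for all x. Define F : I × R → R by F(x,y) = s(L(x)) a(y) + b(x). Then for every continuous function f : I → R, the maximum variation of the function x ↦ F(L^{−1}(x), f(L^{−1}(x))) over L(I) satisfies R_{F(L^{−1}, f∘L^{−1})}[L(I)] ≤ s̄ L_a R_f[I] + |I| (c_s ā_f + L_b), where |I| is the length of I, s̄ = max_{x∈I} |s(x)| and ā_f = max_{x∈I} |a(f(x))|. -/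
open Set

/-! Writing `F(x, y) = s(L x) a(y) + b(x)` and `g = F(·, f ·)`, the variation of `g ∘ L⁻¹` over
`L(I)` is the variation of `g` over `I`. For `u, v ∈ I` split
`g u - g v = s(L u) (a(f u) - a(f v)) + (s(L u) - s(L v)) a(f v) + (b u - b v)`;
the three terms are bounded by `s̄ L_a R_f[I]`, `c_s |I| ā_f` and `L_b |I|`, using that all points
involved, including `L u` and `L v`, lie in `I`. -/

/-- Maximum variation `R_f[D] = sup{|f(x₂) − f(x₁)| : x₁, x₂ ∈ D}` of `f` on `D`. -/
noncomputable def maxVar (f : ℝ → ℝ) (D : Set ℝ) : ℝ :=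
  sSup {d : ℝ | ∃ u ∈ D, ∃ v ∈ D, d = |f u - f v|}

section MaxVar

variable {f : ℝ → ℝ} {D : Set ℝ}

theorem maxVar_comp_image_of_leftInvOn {L Linv : ℝ → ℝ} (h : LeftInvOn Linv L D) :
    maxVar (f ∘ Linv) (L '' D) = maxVar f D := by
  unfold maxVar
  congr 1
  ext d
  simp only [mem_ofPred_eq, exists_mem_image, Function.comp_apply]
  constructor <;> rintro ⟨u, hu, v, hv, rfl⟩ <;> exact ⟨u, hu, v, hv, by rw [h hu, h hv]⟩

theorem maxVar_le_of_forall {C : ℝ} (hD : D.Nonempty)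
    (h : ∀ u ∈ D, ∀ v ∈ D, |f u - f v| ≤ C) : maxVar f D ≤ C := by
  obtain ⟨u, hu⟩ := hD
  refine csSup_le ⟨_, u, hu, u, hu, rfl⟩ ?_
  rintro d ⟨u, hu, v, hv, rfl⟩
  exact h u hu v hv

theorem abs_sub_le_maxVar (hD : IsCompact D) (hf : ContinuousOn f D) {u v : ℝ} (hu : u ∈ D)
    (hv : v ∈ D) : |f u - f v| ≤ maxVar f D := by
  obtain ⟨M, hM⟩ := hD.exists_bound_of_continuousOn hf
  refine le_csSup ⟨2 * M, ?_⟩ ⟨u, hu, v, hv, rfl⟩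
  rintro d ⟨x, hx, y, hy, rfl⟩
  have hx' : |f x| ≤ M := hM x hx
  have hy' : |f y| ≤ M := hM y hy
  linarith [abs_sub (f x) (f y)]

end MaxVar

theorem abs_le_sSup_abs_image {g : ℝ → ℝ} {D : Set ℝ} (hD : IsCompact D)
    (hg : ContinuousOn g D) {t : ℝ} (ht : t ∈ D) : |g t| ≤ sSup ((fun t => |g t|) '' D) :=
  le_csSup (hD.bddAbove_image (continuous_abs.comp_continuousOn hg)) ⟨t, ht, rfl⟩

theorem abs_mul_add_sub_mul_add_le (s₁ s₂ a₁ a₂ b₁ b₂ : ℝ) :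
    |s₁ * a₁ + b₁ - (s₂ * a₂ + b₂)| ≤ |s₁| * |a₁ - a₂| + |s₁ - s₂| * |a₂| + |b₁ - b₂| := by
  rw [← abs_mul, ← abs_mul]
  calc |s₁ * a₁ + b₁ - (s₂ * a₂ + b₂)|
      = |s₁ * (a₁ - a₂) + (s₁ - s₂) * a₂ + (b₁ - b₂)| := by ring_nf
    _ ≤ |s₁ * (a₁ - a₂)| + |(s₁ - s₂) * a₂| + |b₁ - b₂| := abs_add_three _ _ _

theorem stmt3_general (p q : ℝ) (hpq : p ≤ q)
    (L Linv a b s : ℝ → ℝ)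
    (La Lb cs : ℝ) (hLa : 0 ≤ La) (hLb : 0 ≤ Lb)
    -- `L : I → I` is a contraction homeomorphism with inverse `Linv`
    (hLmap : Set.MapsTo L (Icc p q) (Icc p q))
    (hLinv : ∀ u ∈ Icc p q, Linv (L u) = u)
    -- `a, b : ℝ → ℝ` Lipschitz with constants `La`, `Lb`
    (ha : ∀ u v : ℝ, |a u - a v| ≤ La * |u - v|)
    (hb : ∀ u v : ℝ, |b u - b v| ≤ Lb * |u - v|)
    -- `s : I → ℝ` a contraction with constant `cs`, with `|s(x)| La < 1`
    (hcs : 0 ≤ cs)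
    (hscon : ∀ u ∈ Icc p q, ∀ v ∈ Icc p q, |s u - s v| ≤ cs * |u - v|)
    (f : ℝ → ℝ) (hf : ContinuousOn f (Icc p q)) :
    maxVar (fun t => s (L (Linv t)) * a (f (Linv t)) + b (Linv t)) (L '' Icc p q) ≤
      sSup ((fun t => |s t|) '' Icc p q) * La * maxVar f (Icc p q) +
        (q - p) * (cs * sSup ((fun t => |a (f t)|) '' Icc p q) + Lb) := by
  have hI : IsCompact (Icc p q) := isCompact_Icc
  have hdist : ∀ u ∈ Icc p q, ∀ v ∈ Icc p q, |u - v| ≤ q - p := fun u hu v hv =>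
    Real.dist_eq u v ▸ Real.dist_le_of_mem_Icc hu hv
  have hsC : ContinuousOn s (Icc p q) := (LipschitzOnWith.of_dist_le' hscon).continuousOn
  have haC : Continuous a := (LipschitzWith.of_dist_le' ha).continuous
  have hs : ∀ t ∈ Icc p q, |s t| ≤ sSup ((fun t => |s t|) '' Icc p q) := fun t ht =>
    abs_le_sSup_abs_image hI hsC ht
  have haf : ∀ t ∈ Icc p q, |a (f t)| ≤ sSup ((fun t => |a (f t)|) '' Icc p q) := fun t ht =>
    abs_le_sSup_abs_image hI (haC.comp_continuousOn hf) ht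
  rw [show (fun t => s (L (Linv t)) * a (f (Linv t)) + b (Linv t)) =
      (fun x => s (L x) * a (f x) + b x) ∘ Linv from rfl,
    maxVar_comp_image_of_leftInvOn fun u hu => hLinv u hu]
  refine maxVar_le_of_forall ⟨p, left_mem_Icc.2 hpq⟩ fun u hu v hv => ?_
  calc _ ≤ |s (L u)| * |a (f u) - a (f v)| + |s (L u) - s (L v)| * |a (f v)| + |b u - b v| :=
        abs_mul_add_sub_mul_add_le _ _ _ _ _ _
    _ ≤ sSup ((fun t => |s t|) '' Icc p q) * (La * maxVar f (Icc p q)) +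
          cs * (q - p) * sSup ((fun t => |a (f t)|) '' Icc p q) + Lb * (q - p) := by
      gcongr
      · exact (abs_nonneg _).trans (hs _ (hLmap hu))
      · exact hs _ (hLmap hu)
      · exact (ha _ _).trans (by gcongr; exact abs_sub_le_maxVar hI hf hu hv)
      · exact (hscon _ (hLmap hu) _ (hLmap hv)).trans
          (by gcongr; exact hdist _ (hLmap hu) _ (hLmap hv))
      · exact haf v hv
      · exact (hb u v).trans (by gcongr; exact hdist u hu v hv)
    _ = _ := by ring

/-- **Lemma 5.** If `F(x,y) = s(L(x)) a(y) + b(x)`, then for every continuous `f : I → ℝ`,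
`R_{F(L⁻¹, f∘L⁻¹)}[L(I)] ≤ s̄ L_a R_f[I] + |I| (c_s ā_f + L_b)`. -/
theorem stmt3 (p q : ℝ) (hpq : p ≤ q)
    (L Linv a b s : ℝ → ℝ)
    (La Lb cL cs : ℝ) (hLa : 0 ≤ La) (hLb : 0 ≤ Lb)
    -- `L : I → I` is a contraction homeomorphism with inverse `Linv`
    (hLmap : Set.MapsTo L (Icc p q) (Icc p q))
    (hcL : 0 ≤ cL) (hcL1 : cL < 1)
    (hLcon : ∀ u ∈ Icc p q, ∀ v ∈ Icc p q, |L u - L v| ≤ cL * |u - v|)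
    (hLinv : ∀ u ∈ Icc p q, Linv (L u) = u)
    -- `a, b : ℝ → ℝ` Lipschitz with constants `La`, `Lb`
    (ha : ∀ u v : ℝ, |a u - a v| ≤ La * |u - v|)
    (hb : ∀ u v : ℝ, |b u - b v| ≤ Lb * |u - v|)
    -- `s : I → ℝ` a contraction with constant `cs`, with `|s(x)| La < 1`
    (hcs : 0 ≤ cs) (hcs1 : cs < 1)
    (hscon : ∀ u ∈ Icc p q, ∀ v ∈ Icc p q, |s u - s v| ≤ cs * |u - v|)
    (hsa : ∀ u ∈ Icc p q, |s u| * La < 1)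
    (f : ℝ → ℝ) (hf : ContinuousOn f (Icc p q)) :
    maxVar (fun t => s (L (Linv t)) * a (f (Linv t)) + b (Linv t)) (L '' Icc p q) ≤
      sSup ((fun t => |s t|) '' Icc p q) * La * maxVar f (Icc p q) +
        (q - p) * (cs * sSup ((fun t => |a (f t)|) '' Icc p q) + Lb) :=
  stmt3_general p q hpq L Linv a b s La Lb cs hLa hLb hLmap hLinv ha hb hcs hscon f hf
end

section
/- (Lemma 7) Let f, g : [0,1] → R be continuous functions whose graphs have box-counting dimensions dim_B Gr(f) and dim_B Gr(g) (the defining limits exist). Define F' : [0,1]² → R by F'(x,y) = f(x) + g(y). Then the box-counting dimension of the graph of F' exists and equals dim_B Gr(F') = 1 + max{dim_B Gr(f), dim_B Gr(g)}. -/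
open Set Filter Topology

/-- `N_δ(A)` for `A ⊆ ℝ²`: the number of `δ`-mesh squares that intersect `A`. -/
noncomputable def meshCount2 (δ : ℝ) (A : Set (ℝ × ℝ)) : ℕ :=
  Set.ncard {k : ℤ × ℤ |
    (A ∩ (Set.Ico ((k.1 : ℝ) * δ) (((k.1 : ℝ) + 1) * δ) ×ˢ
          Set.Ico ((k.2 : ℝ) * δ) (((k.2 : ℝ) + 1) * δ))).Nonempty}

/-- `N_δ(A)` for `A ⊆ ℝ³`: the number of `δ`-mesh cubes that intersect `A`. -/
noncomputable def meshCount3 (δ : ℝ) (A : Set (ℝ × ℝ × ℝ)) : ℕ :=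
  Set.ncard {k : ℤ × ℤ × ℤ |
    (A ∩ (Set.Ico ((k.1 : ℝ) * δ) (((k.1 : ℝ) + 1) * δ) ×ˢ
          (Set.Ico ((k.2.1 : ℝ) * δ) (((k.2.1 : ℝ) + 1) * δ) ×ˢ
           Set.Ico ((k.2.2 : ℝ) * δ) (((k.2.2 : ℝ) + 1) * δ)))).Nonempty}

/-- `A ⊆ ℝ²` has box-counting dimension `D`: the defining limit exists and equals `D`. -/
def HasBoxDim2 (A : Set (ℝ × ℝ)) (D : ℝ) : Prop :=
  Tendsto (fun δ : ℝ => Real.log (meshCount2 δ A) / (-Real.log δ)) (𝓝[>] 0) (𝓝 D)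

/-- `A ⊆ ℝ³` has box-counting dimension `D`: the defining limit exists and equals `D`. -/
def HasBoxDim3 (A : Set (ℝ × ℝ × ℝ)) (D : ℝ) : Prop :=
  Tendsto (fun δ : ℝ => Real.log (meshCount3 δ A) / (-Real.log δ)) (𝓝[>] 0) (𝓝 D)

/-- The graph of `f` over `[0,1]`. -/
def Gr1 (f : ℝ → ℝ) : Set (ℝ × ℝ) := {p | p.1 ∈ Set.Icc (0:ℝ) 1 ∧ p.2 = f p.1}

/-- The graph of `F : [0,1]² → ℝ`. -/
def Gr2 (F : ℝ → ℝ → ℝ) : Set (ℝ × ℝ × ℝ) :=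
  {p | p.1 ∈ Set.Icc (0:ℝ) 1 ∧ p.2.1 ∈ Set.Icc (0:ℝ) 1 ∧ p.2.2 = F p.1 p.2.1}

/-!
Cut `[0,1]` into the `m ≈ δ⁻¹` mesh columns `I_i`. Since `f(I_i)` is an interval, the graph of
`f` meets `c_i ≈ osc_{I_i} f / δ` mesh squares above `I_i` (likewise `c'_j` for `g` above `I_j`),
up to an additive error of `2`. Above `I_i × I_j` the graph of `f x + g y` meets `n_ij` cubes,
where `f(I_i) + g(I_j)` is an interval of length `osc_{I_i} f + osc_{I_j} g`; hence
`max c_i c'_j - 2 ≤ n_ij ≤ c_i + c'_j + 2`, and `n_ij ≥ 1`. Summing over the `m²` cells gives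
`N_δ(Gr F') ≍ δ⁻¹ · max (N_δ(Gr f)) (N_δ(Gr g))` with constants independent of `δ`, and dividing
logarithms by `-log δ` turns this into `1 + max Df Dg`.
-/

open scoped Pointwise

def meshIndices (δ : ℝ) (T : Set ℝ) : Set ℤ :=
  {k | (T ∩ Ico ((k : ℝ) * δ) (((k : ℝ) + 1) * δ)).Nonempty}

lemma Int.ncard_Icc {a b : ℤ} (h : a ≤ b + 1) : ((Icc a b).ncard : ℤ) = b + 1 - a := by
  rw [← Finset.coe_Icc, ncard_coe_finset, Int.card_Icc_of_le _ _ h]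

lemma csSup_add_sub_csInf_add {M : Type*} [ConditionallyCompleteLattice M] [AddCommGroup M]
    [AddLeftMono M] {S T : Set M} (hS : S.Nonempty) (hSlo : BddBelow S) (hShi : BddAbove S)
    (hT : T.Nonempty) (hTlo : BddBelow T) (hThi : BddAbove T) :
    sSup (S + T) - sInf (S + T) = (sSup S - sInf S) + (sSup T - sInf T) := by
  rw [csSup_add hS hShi hT hThi, csInf_add hS hSlo hT hTlo]
  abel

section MeshIndices

variable {δ : ℝ} {S T : Set ℝ}

lemma mem_Ico_mul_iff_floor_div_eq (hδ : 0 < δ) {t : ℝ} {k : ℤ} :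
    t ∈ Ico ((k : ℝ) * δ) (((k : ℝ) + 1) * δ) ↔ ⌊t / δ⌋ = k := by
  rw [Int.floor_eq_iff, le_div_iff₀ hδ, div_lt_iff₀ hδ, mem_Ico]

lemma meshIndices_eq_image (hδ : 0 < δ) (T : Set ℝ) :
    meshIndices δ T = (fun t => ⌊t / δ⌋) '' T := by
  ext k
  simp only [meshIndices, mem_ofPred_eq, inter_nonempty, mem_Ico_mul_iff_floor_div_eq hδ,
    mem_image]

@[simp]
lemma meshIndices_empty (δ : ℝ) : meshIndices δ ∅ = ∅ := by
  simp [meshIndices]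

lemma meshIndices_subset_Icc (hδ : 0 < δ) (hlo : BddBelow T) (hhi : BddAbove T) :
    meshIndices δ T ⊆ Icc ⌊sInf T / δ⌋ ⌊sSup T / δ⌋ := by
  rw [meshIndices_eq_image hδ]
  rintro _ ⟨t, ht, rfl⟩
  exact ⟨Int.floor_le_floor (by gcongr; exact csInf_le hlo ht),
    Int.floor_le_floor (by gcongr; exact le_csSup hhi ht)⟩

lemma meshIndices_finite (hδ : 0 < δ) (hlo : BddBelow T) (hhi : BddAbove T) :
    (meshIndices δ T).Finite :=
  (finite_Icc _ _).subset (meshIndices_subset_Icc hδ hlo hhi)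

lemma Icc_floor_div_subset_meshIndices (hδ : 0 < δ) (hT : T.OrdConnected) {a b : ℝ}
    (ha : a ∈ T) (hb : b ∈ T) : Icc ⌊a / δ⌋ ⌊b / δ⌋ ⊆ meshIndices δ T := by
  rintro k ⟨hak, hkb⟩
  rcases hak.eq_or_lt with rfl | hak
  · exact ⟨a, ha, (mem_Ico_mul_iff_floor_div_eq hδ).2 rfl⟩
  · have hlt : a < k * δ := (div_lt_iff₀ hδ).1 (Int.floor_lt.1 hak)
    have hle : k * δ ≤ b := (le_div_iff₀ hδ).1 (Int.le_floor.1 hkb)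
    exact ⟨k * δ, hT.out ha hb ⟨hlt.le, hle⟩, left_mem_Ico.2 (by linarith)⟩

lemma one_le_ncard_meshIndices (hδ : 0 < δ) (hT : T.Nonempty) (hlo : BddBelow T)
    (hhi : BddAbove T) : 1 ≤ (meshIndices δ T).ncard :=
  (ncard_pos (meshIndices_finite hδ hlo hhi)).2 (by rw [meshIndices_eq_image hδ]; exact hT.image _)

lemma ncard_meshIndices_mul_le (hδ : 0 < δ) (hT : T.Nonempty) (hlo : BddBelow T)
    (hhi : BddAbove T) : (meshIndices δ T).ncard * δ ≤ sSup T - sInf T + 2 * δ := by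
  have hle : ⌊sInf T / δ⌋ ≤ ⌊sSup T / δ⌋ + 1 := by
    have := Int.floor_le_floor (div_le_div_of_nonneg_right (csInf_le_csSup hT hlo hhi) hδ.le)
    omega
  have hcard : ((meshIndices δ T).ncard : ℤ) ≤ ⌊sSup T / δ⌋ + 1 - ⌊sInf T / δ⌋ := by
    rw [← Int.ncard_Icc hle]
    exact_mod_cast ncard_le_ncard (meshIndices_subset_Icc hδ hlo hhi) (finite_Icc _ _)
  have hcard' : ((meshIndices δ T).ncard : ℝ) ≤ ⌊sSup T / δ⌋ + 1 - ⌊sInf T / δ⌋ := by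
    exact_mod_cast hcard
  have h1 := Int.floor_le (sSup T / δ)
  have h2 := Int.sub_one_lt_floor (sInf T / δ)
  rw [← le_div_iff₀ hδ, add_div, sub_div, mul_div_cancel_right₀ _ hδ.ne']
  linarith

lemma sub_le_ncard_meshIndices_mul (hδ : 0 < δ) (hT : T.Nonempty) (hlo : BddBelow T)
    (hhi : BddAbove T) (hc : T.OrdConnected) :
    sSup T - sInf T ≤ (meshIndices δ T).ncard * δ := by
  set n := (meshIndices δ T).ncard
  suffices h : ∀ a ∈ T, ∀ b ∈ T, b - a ≤ n * δ by
    have hsup : ∀ a ∈ T, sSup T ≤ n * δ + a :=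
      fun a ha => csSup_le hT fun b hb => by linarith [h a ha b hb]
    have hinf : sSup T - n * δ ≤ sInf T := le_csInf hT fun a ha => by linarith [hsup a ha]
    linarith
  intro a ha b hb
  rcases le_or_gt a b with hab | hab
  · have hfl : ⌊a / δ⌋ ≤ ⌊b / δ⌋ + 1 := by
      have := Int.floor_le_floor (div_le_div_of_nonneg_right hab hδ.le)
      omega
    have hcard : ⌊b / δ⌋ + 1 - ⌊a / δ⌋ ≤ (n : ℤ) := by
      rw [← Int.ncard_Icc hfl]
      exact_mod_cast ncard_le_ncard (Icc_floor_div_subset_meshIndices hδ hc ha hb)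
        (meshIndices_finite hδ hlo hhi)
    have hcard' : (⌊b / δ⌋ : ℝ) + 1 - ⌊a / δ⌋ ≤ n := by exact_mod_cast hcard
    have h1 := Int.floor_le (a / δ)
    have h2 := Int.lt_floor_add_one (b / δ)
    rw [← div_le_iff₀ hδ, sub_div]
    linarith
  · have : (0 : ℝ) ≤ n * δ := by positivity
    linarith

lemma ncard_meshIndices_add_le (hδ : 0 < δ)
    (hS : S.Nonempty) (hSlo : BddBelow S) (hShi : BddAbove S) (hSc : S.OrdConnected)
    (hT : T.Nonempty) (hTlo : BddBelow T) (hThi : BddAbove T) (hTc : T.OrdConnected) :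
    (meshIndices δ (S + T)).ncard ≤ (meshIndices δ S).ncard + (meshIndices δ T).ncard + 2 := by
  have h : ((meshIndices δ (S + T)).ncard : ℝ) * δ ≤
      ((meshIndices δ S).ncard + (meshIndices δ T).ncard + 2) * δ := by
    calc ((meshIndices δ (S + T)).ncard : ℝ) * δ
        ≤ sSup (S + T) - sInf (S + T) + 2 * δ :=
          ncard_meshIndices_mul_le hδ (hS.add hT) (hSlo.add hTlo) (hShi.add hThi)
      _ = (sSup S - sInf S) + (sSup T - sInf T) + 2 * δ := by
          rw [csSup_add_sub_csInf_add hS hSlo hShi hT hTlo hThi]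
      _ ≤ (meshIndices δ S).ncard * δ + (meshIndices δ T).ncard * δ + 2 * δ := by
          gcongr
          · exact sub_le_ncard_meshIndices_mul hδ hS hSlo hShi hSc
          · exact sub_le_ncard_meshIndices_mul hδ hT hTlo hThi hTc
      _ = _ := by ring
  exact_mod_cast le_of_mul_le_mul_right h hδ

lemma ncard_meshIndices_le_add (hδ : 0 < δ)
    (hS : S.Nonempty) (hSlo : BddBelow S) (hShi : BddAbove S) (hSc : S.OrdConnected)
    (hT : T.Nonempty) (hTlo : BddBelow T) (hThi : BddAbove T) (hTc : T.OrdConnected) :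
    (meshIndices δ S).ncard ≤ (meshIndices δ (S + T)).ncard + 2 := by
  have hc : (S + T).OrdConnected := convex_iff_ordConnected.1
    ((convex_iff_ordConnected.2 hSc).add (convex_iff_ordConnected.2 hTc))
  have h : ((meshIndices δ S).ncard : ℝ) * δ ≤ ((meshIndices δ (S + T)).ncard + 2) * δ := by
    calc ((meshIndices δ S).ncard : ℝ) * δ
        ≤ sSup S - sInf S + 2 * δ := ncard_meshIndices_mul_le hδ hS hSlo hShi
      _ ≤ (sSup S - sInf S) + (sSup T - sInf T) + 2 * δ := by
          linarith [csInf_le_csSup hT hTlo hThi]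
      _ = sSup (S + T) - sInf (S + T) + 2 * δ := by
          rw [csSup_add_sub_csInf_add hS hSlo hShi hT hTlo hThi]
      _ ≤ ((meshIndices δ (S + T)).ncard + 2) * δ := by
          linarith [sub_le_ncard_meshIndices_mul hδ (hS.add hT) (hSlo.add hTlo) (hShi.add hThi) hc]
  exact_mod_cast le_of_mul_le_mul_right h hδ

end MeshIndices

lemma setOf_snd_mem_eq_biUnion {α β : Type*} (X : Finset α) {K : α → Set β}
    (hX : ∀ i ∉ X, K i = ∅) : {p : α × β | p.2 ∈ K p.1} = ⋃ i ∈ (X : Set α), {i} ×ˢ K i := by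
  ext ⟨i, j⟩
  simp only [mem_ofPred_eq, mem_iUnion, mem_prod, mem_singleton_iff, Finset.mem_coe,
    exists_prop]
  refine ⟨fun h => ⟨i, ?_, rfl, h⟩, fun ⟨_, _, rfl, h⟩ => h⟩
  by_contra hi
  simp [hX i hi] at h

lemma finite_setOf_snd_mem {α β : Type*} (X : Finset α) {K : α → Set β}
    (hfin : ∀ i ∈ X, (K i).Finite) (hX : ∀ i ∉ X, K i = ∅) :
    {p : α × β | p.2 ∈ K p.1}.Finite := by
  rw [setOf_snd_mem_eq_biUnion X hX]
  exact X.finite_toSet.biUnion fun i hi => (finite_singleton i).prod (hfin i hi)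

lemma ncard_setOf_snd_mem {α β : Type*} (X : Finset α) {K : α → Set β}
    (hfin : ∀ i ∈ X, (K i).Finite) (hX : ∀ i ∉ X, K i = ∅) :
    {p : α × β | p.2 ∈ K p.1}.ncard = ∑ i ∈ X, (K i).ncard := by
  rw [setOf_snd_mem_eq_biUnion X hX, X.finite_toSet.ncard_biUnion
    (fun i hi => (finite_singleton i).prod (hfin i hi))
    (fun i _ j _ hij => disjoint_prod.2 (Or.inl (disjoint_singleton.2 hij))),
    finsum_mem_coe_finset]
  simp [ncard_prod]

def meshColumn (δ : ℝ) (i : ℤ) : Set ℝ := Icc 0 1 ∩ Ico ((i : ℝ) * δ) (((i : ℝ) + 1) * δ)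

noncomputable def meshColumns (δ : ℝ) : Finset ℤ := Finset.Icc 0 ⌊δ⁻¹⌋

section Columns

variable {δ : ℝ} {f g : ℝ → ℝ}

lemma meshColumn_nonempty_iff (hδ : 0 < δ) {i : ℤ} :
    (meshColumn δ i).Nonempty ↔ i ∈ meshColumns δ := by
  simp only [meshColumn, meshColumns, Finset.mem_Icc, inter_nonempty,
    mem_Ico_mul_iff_floor_div_eq hδ]
  constructor
  · rintro ⟨x, ⟨hx0, hx1⟩, rfl⟩
    refine ⟨Int.floor_nonneg.2 (div_nonneg hx0 hδ.le), Int.floor_le_floor ?_⟩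
    rw [div_eq_mul_inv]
    exact mul_le_of_le_one_left (inv_nonneg.2 hδ.le) hx1
  · rintro ⟨hi0, hi1⟩
    have hi1' : (i : ℝ) * δ ≤ 1 := by
      calc (i : ℝ) * δ ≤ δ⁻¹ * δ := by gcongr; exact Int.le_floor.1 hi1
        _ = 1 := inv_mul_cancel₀ hδ.ne'
    refine ⟨i * δ, ⟨mul_nonneg (by exact_mod_cast hi0) hδ.le, hi1'⟩, ?_⟩
    rw [mul_div_cancel_right₀ _ hδ.ne', Int.floor_intCast]

lemma meshColumn_eq_empty (hδ : 0 < δ) {i : ℤ} (hi : i ∉ meshColumns δ) :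
    meshColumn δ i = ∅ :=
  not_nonempty_iff_eq_empty.1 fun h => hi ((meshColumn_nonempty_iff hδ).1 h)

lemma card_meshColumns (hδ : 0 < δ) : ((meshColumns δ).card : ℝ) = ⌊δ⁻¹⌋ + 1 := by
  have h := Int.card_Icc_of_le 0 ⌊δ⁻¹⌋ (by have := Int.floor_nonneg.2 (inv_nonneg.2 hδ.le); omega)
  rw [meshColumns]
  exact_mod_cast h.trans (sub_zero _)

lemma bddBelow_image_meshColumn (hf : ContinuousOn f (Icc 0 1)) (δ : ℝ) (i : ℤ) :
    BddBelow (f '' meshColumn δ i) :=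
  (isCompact_Icc.image_of_continuousOn hf).bddBelow.mono (image_mono inter_subset_left)

lemma bddAbove_image_meshColumn (hf : ContinuousOn f (Icc 0 1)) (δ : ℝ) (i : ℤ) :
    BddAbove (f '' meshColumn δ i) :=
  (isCompact_Icc.image_of_continuousOn hf).bddAbove.mono (image_mono inter_subset_left)

lemma ordConnected_image_meshColumn (hf : ContinuousOn f (Icc 0 1)) (δ : ℝ) (i : ℤ) :
    (f '' meshColumn δ i).OrdConnected :=
  ((ordConnected_Icc.inter ordConnected_Ico).isPreconnected.image f
    (hf.mono inter_subset_left)).ordConnected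

lemma meshCount2_Gr1_eq_ncard (δ : ℝ) (f : ℝ → ℝ) :
    meshCount2 δ (Gr1 f) = {p : ℤ × ℤ | p.2 ∈ meshIndices δ (f '' meshColumn δ p.1)}.ncard := by
  rw [meshCount2]
  congr 1
  ext ⟨i, j⟩
  simp only [Gr1, meshIndices, mem_ofPred_eq, inter_nonempty, mem_prod, Prod.exists]
  constructor
  · rintro ⟨x, _, ⟨hx, rfl⟩, hxi, hj⟩
    exact ⟨f x, ⟨x, ⟨hx, hxi⟩, rfl⟩, hj⟩
  · rintro ⟨_, ⟨x, ⟨hx, hxi⟩, rfl⟩, hj⟩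
    exact ⟨x, f x, ⟨hx, rfl⟩, hxi, hj⟩

lemma meshCount3_Gr2_add_eq_ncard (δ : ℝ) (f g : ℝ → ℝ) :
    meshCount3 δ (Gr2 fun x y => f x + g y) = {p : ℤ × ℤ × ℤ | p.2 ∈ {q : ℤ × ℤ |
      q.2 ∈ meshIndices δ (f '' meshColumn δ p.1 + g '' meshColumn δ q.1)}}.ncard := by
  rw [meshCount3]
  congr 1
  ext ⟨i, j, k⟩
  simp only [Gr2, meshIndices, mem_ofPred_eq, inter_nonempty, mem_prod, Prod.exists]
  constructor
  · rintro ⟨x, y, _, ⟨hx, hy, rfl⟩, hxi, hyj, hk⟩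
    exact ⟨f x + g y, add_mem_add ⟨x, ⟨hx, hxi⟩, rfl⟩ ⟨y, ⟨hy, hyj⟩, rfl⟩, hk⟩
  · rintro ⟨_, ⟨_, ⟨x, ⟨hx, hxi⟩, rfl⟩, _, ⟨y, ⟨hy, hyj⟩, rfl⟩, rfl⟩, hk⟩
    exact ⟨x, y, f x + g y, ⟨hx, hy, rfl⟩, hxi, hyj, hk⟩

lemma meshIndices_image_add_finite (hδ : 0 < δ) (hf : ContinuousOn f (Icc 0 1))
    (hg : ContinuousOn g (Icc 0 1)) (i j : ℤ) :
    (meshIndices δ (f '' meshColumn δ i + g '' meshColumn δ j)).Finite :=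
  meshIndices_finite hδ ((bddBelow_image_meshColumn hf δ i).add (bddBelow_image_meshColumn hg δ j))
    ((bddAbove_image_meshColumn hf δ i).add (bddAbove_image_meshColumn hg δ j))

lemma meshCount2_Gr1_eq_sum (hδ : 0 < δ) (hf : ContinuousOn f (Icc 0 1)) :
    meshCount2 δ (Gr1 f) = ∑ i ∈ meshColumns δ, (meshIndices δ (f '' meshColumn δ i)).ncard := by
  rw [meshCount2_Gr1_eq_ncard]
  exact ncard_setOf_snd_mem _
    (fun i _ => meshIndices_finite hδ (bddBelow_image_meshColumn hf δ i)
      (bddAbove_image_meshColumn hf δ i))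
    (fun i hi => by simp [meshColumn_eq_empty hδ hi])

lemma meshCount3_Gr2_add_eq_sum (hδ : 0 < δ) (hf : ContinuousOn f (Icc 0 1))
    (hg : ContinuousOn g (Icc 0 1)) :
    meshCount3 δ (Gr2 fun x y => f x + g y) = ∑ i ∈ meshColumns δ, ∑ j ∈ meshColumns δ,
      (meshIndices δ (f '' meshColumn δ i + g '' meshColumn δ j)).ncard := by
  have hrow : ∀ i, ∀ j ∉ meshColumns δ,
      meshIndices δ (f '' meshColumn δ i + g '' meshColumn δ j) = ∅ := fun i j hj => by
    simp [meshColumn_eq_empty hδ hj]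
  rw [meshCount3_Gr2_add_eq_ncard, ncard_setOf_snd_mem (meshColumns δ)
    (fun i _ => finite_setOf_snd_mem _ (fun j _ => meshIndices_image_add_finite hδ hf hg i j)
      (hrow i))
    (fun i hi => by ext; simp [meshColumn_eq_empty hδ hi])]
  exact Finset.sum_congr rfl fun i _ => ncard_setOf_snd_mem _
    (fun j _ => meshIndices_image_add_finite hδ hf hg i j) (hrow i)

lemma image_meshColumn_nonempty (hδ : 0 < δ) (f : ℝ → ℝ) {i : ℤ} (hi : i ∈ meshColumns δ) :
    (f '' meshColumn δ i).Nonempty :=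
  ((meshColumn_nonempty_iff hδ).2 hi).image f

lemma one_le_ncard_meshIndices_image_add (hδ : 0 < δ) (hf : ContinuousOn f (Icc 0 1))
    (hg : ContinuousOn g (Icc 0 1)) {i j : ℤ} (hi : i ∈ meshColumns δ) (hj : j ∈ meshColumns δ) :
    1 ≤ (meshIndices δ (f '' meshColumn δ i + g '' meshColumn δ j)).ncard :=
  one_le_ncard_meshIndices hδ
    ((image_meshColumn_nonempty hδ f hi).add (image_meshColumn_nonempty hδ g hj))
    ((bddBelow_image_meshColumn hf δ i).add (bddBelow_image_meshColumn hg δ j))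
    ((bddAbove_image_meshColumn hf δ i).add (bddAbove_image_meshColumn hg δ j))

lemma ncard_meshIndices_image_le_add (hδ : 0 < δ) (hf : ContinuousOn f (Icc 0 1))
    (hg : ContinuousOn g (Icc 0 1)) {i j : ℤ} (hi : i ∈ meshColumns δ) (hj : j ∈ meshColumns δ) :
    (meshIndices δ (f '' meshColumn δ i)).ncard ≤
      (meshIndices δ (f '' meshColumn δ i + g '' meshColumn δ j)).ncard + 2 :=
  ncard_meshIndices_le_add hδ
    (image_meshColumn_nonempty hδ f hi) (bddBelow_image_meshColumn hf δ i)
    (bddAbove_image_meshColumn hf δ i) (ordConnected_image_meshColumn hf δ i)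
    (image_meshColumn_nonempty hδ g hj) (bddBelow_image_meshColumn hg δ j)
    (bddAbove_image_meshColumn hg δ j) (ordConnected_image_meshColumn hg δ j)

lemma ncard_meshIndices_image_add_le (hδ : 0 < δ) (hf : ContinuousOn f (Icc 0 1))
    (hg : ContinuousOn g (Icc 0 1)) {i j : ℤ} (hi : i ∈ meshColumns δ) (hj : j ∈ meshColumns δ) :
    (meshIndices δ (f '' meshColumn δ i + g '' meshColumn δ j)).ncard ≤
      (meshIndices δ (f '' meshColumn δ i)).ncard +
        (meshIndices δ (g '' meshColumn δ j)).ncard + 2 :=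
  ncard_meshIndices_add_le hδ
    (image_meshColumn_nonempty hδ f hi) (bddBelow_image_meshColumn hf δ i)
    (bddAbove_image_meshColumn hf δ i) (ordConnected_image_meshColumn hf δ i)
    (image_meshColumn_nonempty hδ g hj) (bddBelow_image_meshColumn hg δ j)
    (bddAbove_image_meshColumn hg δ j) (ordConnected_image_meshColumn hg δ j)

lemma card_meshColumns_le_meshCount2 (hδ : 0 < δ) (hf : ContinuousOn f (Icc 0 1)) :
    (meshColumns δ).card ≤ meshCount2 δ (Gr1 f) := by
  rw [meshCount2_Gr1_eq_sum hδ hf]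
  simpa using Finset.card_nsmul_le_sum _ _ 1 fun i hi =>
    one_le_ncard_meshIndices hδ (image_meshColumn_nonempty hδ f hi)
      (bddBelow_image_meshColumn hf δ i) (bddAbove_image_meshColumn hf δ i)

lemma card_meshColumns_mul_meshCount2_le (hδ : 0 < δ) (hf : ContinuousOn f (Icc 0 1))
    (hg : ContinuousOn g (Icc 0 1)) :
    (meshColumns δ).card * meshCount2 δ (Gr1 f) ≤ 3 * meshCount3 δ (Gr2 fun x y => f x + g y) := by
  rw [meshCount2_Gr1_eq_sum hδ hf, meshCount3_Gr2_add_eq_sum hδ hf hg, Finset.mul_sum,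
    Finset.mul_sum]
  refine Finset.sum_le_sum fun i hi => ?_
  rw [Finset.mul_sum, ← smul_eq_mul, ← Finset.sum_const]
  refine Finset.sum_le_sum fun j hj => ?_
  have h1 := one_le_ncard_meshIndices_image_add hδ hf hg hi hj
  have h2 := ncard_meshIndices_image_le_add hδ hf hg hi hj
  omega

lemma meshCount3_Gr2_add_comm (hδ : 0 < δ) (hf : ContinuousOn f (Icc 0 1))
    (hg : ContinuousOn g (Icc 0 1)) :
    meshCount3 δ (Gr2 fun x y => f x + g y) = meshCount3 δ (Gr2 fun x y => g x + f y) := by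
  rw [meshCount3_Gr2_add_eq_sum hδ hf hg, meshCount3_Gr2_add_eq_sum hδ hg hf, Finset.sum_comm]
  simp only [add_comm]

lemma meshCount3_Gr2_add_le (hδ : 0 < δ) (hf : ContinuousOn f (Icc 0 1))
    (hg : ContinuousOn g (Icc 0 1)) :
    meshCount3 δ (Gr2 fun x y => f x + g y) ≤ (meshColumns δ).card * meshCount2 δ (Gr1 f) +
      (meshColumns δ).card * meshCount2 δ (Gr1 g) +
        2 * (meshColumns δ).card * (meshColumns δ).card := by
  rw [meshCount2_Gr1_eq_sum hδ hf, meshCount2_Gr1_eq_sum hδ hg, meshCount3_Gr2_add_eq_sum hδ hf hg]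
  calc _ ≤ ∑ i ∈ meshColumns δ, ∑ j ∈ meshColumns δ, ((meshIndices δ (f '' meshColumn δ i)).ncard
          + (meshIndices δ (g '' meshColumn δ j)).ncard + 2) :=
        Finset.sum_le_sum fun i hi => Finset.sum_le_sum fun j hj =>
          ncard_meshIndices_image_add_le hδ hf hg hi hj
    _ = _ := by
        simp only [Finset.sum_add_distrib, Finset.sum_const, smul_eq_mul, ← Finset.mul_sum]
        ring

lemma inv_mul_max_meshCount2_le (hδ : 0 < δ) (hf : ContinuousOn f (Icc 0 1))
    (hg : ContinuousOn g (Icc 0 1)) :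
    δ⁻¹ * max (meshCount2 δ (Gr1 f) : ℝ) (meshCount2 δ (Gr1 g)) ≤
      3 * meshCount3 δ (Gr2 fun x y => f x + g y) := by
  have hm : δ⁻¹ ≤ (meshColumns δ).card := by
    rw [card_meshColumns hδ]; exact (Int.lt_floor_add_one _).le
  have hmf : ((meshColumns δ).card : ℝ) * meshCount2 δ (Gr1 f) ≤
      3 * meshCount3 δ (Gr2 fun x y => f x + g y) := by
    exact_mod_cast card_meshColumns_mul_meshCount2_le hδ hf hg
  have hmg : ((meshColumns δ).card : ℝ) * meshCount2 δ (Gr1 g) ≤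
      3 * meshCount3 δ (Gr2 fun x y => f x + g y) := by
    rw [meshCount3_Gr2_add_comm hδ hf hg]
    exact_mod_cast card_meshColumns_mul_meshCount2_le hδ hg hf
  rw [mul_max_of_nonneg _ _ (inv_nonneg.2 hδ.le)]
  exact max_le ((mul_le_mul_of_nonneg_right hm (by positivity)).trans hmf)
    ((mul_le_mul_of_nonneg_right hm (by positivity)).trans hmg)

lemma meshCount3_Gr2_add_le_inv_mul_max (hδ : 0 < δ) (hδ1 : δ ≤ 1) (hf : ContinuousOn f (Icc 0 1))
    (hg : ContinuousOn g (Icc 0 1)) :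
    (meshCount3 δ (Gr2 fun x y => f x + g y) : ℝ) ≤
      8 * (δ⁻¹ * max (meshCount2 δ (Gr1 f) : ℝ) (meshCount2 δ (Gr1 g))) := by
  have h3 : (meshCount3 δ (Gr2 fun x y => f x + g y) : ℝ) ≤
      (meshColumns δ).card * meshCount2 δ (Gr1 f) + (meshColumns δ).card * meshCount2 δ (Gr1 g) +
        2 * (meshColumns δ).card * (meshColumns δ).card := by
    exact_mod_cast meshCount3_Gr2_add_le hδ hf hg
  have hmf : ((meshColumns δ).card : ℝ) ≤ meshCount2 δ (Gr1 f) := by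
    exact_mod_cast card_meshColumns_le_meshCount2 hδ hf
  have hm : ((meshColumns δ).card : ℝ) ≤ 2 * δ⁻¹ := by
    rw [card_meshColumns hδ]
    linarith [Int.floor_le δ⁻¹, one_le_inv_iff₀.2 ⟨hδ, hδ1⟩]
  set m : ℝ := ((meshColumns δ).card : ℝ)
  set M := max (meshCount2 δ (Gr1 f) : ℝ) (meshCount2 δ (Gr1 g))
  calc _ ≤ m * meshCount2 δ (Gr1 f) + m * meshCount2 δ (Gr1 g) + 2 * m * m := h3
    _ ≤ m * M + m * M + 2 * m * M := by
        gcongr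
        exacts [le_max_left _ _, le_max_right _ _, hmf.trans (le_max_left _ _)]
    _ = 4 * m * M := by ring
    _ ≤ 4 * (2 * δ⁻¹) * M := by gcongr
    _ = 8 * (δ⁻¹ * M) := by ring

lemma meshCount2_Gr1_pos (hδ : 0 < δ) (hf : ContinuousOn f (Icc 0 1)) :
    0 < meshCount2 δ (Gr1 f) :=
  (Finset.card_pos.2 ⟨0, by simp [meshColumns, Int.floor_nonneg, hδ.le]⟩).trans_le
    (card_meshColumns_le_meshCount2 hδ hf)

end Columns

lemma tendsto_neg_log_nhdsGT_zero : Tendsto (fun δ : ℝ => -Real.log δ) (𝓝[>] 0) atTop :=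
  tendsto_neg_atBot_atTop.comp Real.tendsto_log_nhdsGT_zero

lemma tendsto_log_div_neg_log_of_le_mul {u v : ℝ → ℝ} {C L : ℝ} (hC : 0 < C)
    (hu : ∀ᶠ δ in 𝓝[>] 0, 0 < u δ) (huv : ∀ᶠ δ in 𝓝[>] 0, u δ ≤ C * v δ)
    (hvu : ∀ᶠ δ in 𝓝[>] 0, v δ ≤ C * u δ)
    (h : Tendsto (fun δ => Real.log (u δ) / -Real.log δ) (𝓝[>] 0) (𝓝 L)) :
    Tendsto (fun δ => Real.log (v δ) / -Real.log δ) (𝓝[>] 0) (𝓝 L) := by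
  have herr : Tendsto (fun δ => Real.log C / -Real.log δ) (𝓝[>] 0) (𝓝 0) :=
    tendsto_const_nhds.div_atTop tendsto_neg_log_nhdsGT_zero
  have hv : ∀ᶠ δ in 𝓝[>] 0, 0 < v δ :=
    (hu.and huv).mono fun δ h => pos_of_mul_pos_right (h.1.trans_le h.2) hC.le
  have hl := tendsto_neg_log_nhdsGT_zero.eventually_gt_atTop 0
  refine tendsto_of_tendsto_of_tendsto_of_le_of_le' (by simpa using h.sub herr)
    (by simpa using h.add herr) ?_ ?_
  · filter_upwards [hu, hv, huv, hl] with δ hu hv huv hl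
    rw [← sub_div]
    gcongr
    rw [sub_le_iff_le_add, add_comm, ← Real.log_mul hC.ne' hv.ne']
    exact Real.log_le_log hu huv
  · filter_upwards [hu, hv, hvu, hl] with δ hu hv hvu hl
    rw [← add_div]
    gcongr
    rw [add_comm, ← Real.log_mul hC.ne' hu.ne']
    exact Real.log_le_log hv hvu

lemma tendsto_log_inv_mul_div_neg_log {M : ℝ → ℝ} {D : ℝ} (hM : ∀ᶠ δ in 𝓝[>] 0, 0 < M δ)
    (h : Tendsto (fun δ => Real.log (M δ) / -Real.log δ) (𝓝[>] 0) (𝓝 D)) :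
    Tendsto (fun δ => Real.log (δ⁻¹ * M δ) / -Real.log δ) (𝓝[>] 0) (𝓝 (1 + D)) := by
  refine (tendsto_const_nhds.add h).congr' ?_
  filter_upwards [hM, self_mem_nhdsWithin, tendsto_neg_log_nhdsGT_zero.eventually_gt_atTop 0]
    with δ hM (hδ : 0 < δ) hl
  rw [Real.log_mul (inv_ne_zero hδ.ne') hM.ne', Real.log_inv, add_div, div_self hl.ne']

lemma tendsto_log_max_div_neg_log {a b : ℝ → ℝ} {A B : ℝ} (ha : ∀ᶠ δ in 𝓝[>] 0, 0 < a δ)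
    (hb : ∀ᶠ δ in 𝓝[>] 0, 0 < b δ)
    (hA : Tendsto (fun δ => Real.log (a δ) / -Real.log δ) (𝓝[>] 0) (𝓝 A))
    (hB : Tendsto (fun δ => Real.log (b δ) / -Real.log δ) (𝓝[>] 0) (𝓝 B)) :
    Tendsto (fun δ => Real.log (max (a δ) (b δ)) / -Real.log δ) (𝓝[>] 0) (𝓝 (max A B)) := by
  refine (hA.max hB).congr' ?_
  filter_upwards [ha, hb, tendsto_neg_log_nhdsGT_zero.eventually_gt_atTop 0] with δ ha hb hl
  rw [Real.strictMonoOn_log.monotoneOn.map_max ha hb, max_div_div_right hl.le]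

/-- **Lemma 7.** For continuous `f, g : [0,1] → ℝ` with box-counting dimensional graphs,
the graph of `F'(x,y) = f(x) + g(y)` has box-counting dimension
`1 + max{dim_B Gr(f), dim_B Gr(g)}`. -/
theorem stmt11 (f g : ℝ → ℝ)
    (hf : ContinuousOn f (Icc 0 1)) (hg : ContinuousOn g (Icc 0 1))
    (Df Dg : ℝ) (hDf : HasBoxDim2 (Gr1 f) Df) (hDg : HasBoxDim2 (Gr1 g) Dg) :
    HasBoxDim3 (Gr2 fun x y => f x + g y) (1 + max Df Dg) := by
  have hδ : ∀ᶠ δ in 𝓝[>] (0 : ℝ), 0 < δ := self_mem_nhdsWithin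
  have hpos : ∀ h : ℝ → ℝ, ContinuousOn h (Icc 0 1) →
      ∀ᶠ δ in 𝓝[>] (0 : ℝ), (0 : ℝ) < meshCount2 δ (Gr1 h) := fun h hh =>
    hδ.mono fun δ hδ => Nat.cast_pos.2 (meshCount2_Gr1_pos hδ hh)
  have hmax : ∀ᶠ δ in 𝓝[>] (0 : ℝ), 0 < max (meshCount2 δ (Gr1 f) : ℝ) (meshCount2 δ (Gr1 g)) :=
    (hpos f hf).mono fun δ h => lt_max_of_lt_left h
  have hlim := tendsto_log_inv_mul_div_neg_log hmax
    (tendsto_log_max_div_neg_log (hpos f hf) (hpos g hg) hDf hDg)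
  refine tendsto_log_div_neg_log_of_le_mul (C := 8) (by norm_num) ?_ ?_ ?_ hlim
  · filter_upwards [hδ, hmax] with δ hδ hmax
    exact mul_pos (inv_pos.2 hδ) hmax
  · filter_upwards [hδ] with δ hδ
    exact (inv_mul_max_meshCount2_le hδ hf hg).trans
      (mul_le_mul_of_nonneg_right (by norm_num) (Nat.cast_nonneg _))
  · filter_upwards [Ioc_mem_nhdsGT one_pos] with δ hδ
    exact meshCount3_Gr2_add_le_inv_mul_max hδ.1 hδ.2 hf hg
end

section
/- (Corollary 1, upper bound) Let f_i, g_j : [0,1] → R (i = 1, …, N; j = 1, …, M) be continuous functions whose graphs have box-counting dimensions (the defining limits exist), and let λ_i, μ_j : [0,1] → R be Lipschitz functions. Define F : [0,1]² → R by F(x,y) = Σ_{i=1}^N λ_i(x) f_i(x) + Σ_{j=1}^M μ_j(y) g_j(y). Then the upper box-counting dimension of the graph of F satisfies dim̄_B Gr(F) ≤ 1 + max_{i,j} {dim_B Gr(f_i), dim_B Gr(g_j)}. -/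
/-!
Cut `[0,1]²` into `δ`-squares `Q_{a,b}`. Over `Q_{a,b}` the function
`F(x,y) = h(x) + k(y)`, with `h = Σ λ_i f_i` and `k = Σ μ_j g_j`, oscillates by at most
`osc_a h + osc_b k`, so the graph of `F` meets at most `2 (osc_a h + osc_b k) / δ + 2` cubes
above `Q_{a,b}`. By the intermediate value theorem the oscillation of a continuous `f` over the
`a`-th column is at most `δ` times the number of mesh squares that `Gr(f)` meets in that column,
and multiplying by a bounded Lipschitz `λ` adds only `O(δ)`. Summing over the `δ⁻²` squares,
`N_δ(Gr F) ≲ δ⁻¹ (Σ N_δ(Gr f_i) + Σ N_δ(Gr g_j)) + δ⁻² ≲ δ^{-(1 + D + ε)}`, where the last term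
is absorbed because `D ≥ 1`: a graph over `[0,1]` meets at least `δ⁻¹` squares.
-/

open Set Filter Topology

open scoped NNReal

lemma floor_div_eq_iff_mem_Ico {δ t : ℝ} (hδ : 0 < δ) {k : ℤ} :
    ⌊t / δ⌋ = k ↔ t ∈ Ico ((k : ℝ) * δ) (((k : ℝ) + 1) * δ) := by
  rw [Int.floor_eq_iff, mem_Ico, le_div_iff₀ hδ, div_lt_iff₀ hδ]

lemma meshCount2_Gr1 {δ : ℝ} (hδ : 0 < δ) (h : ℝ → ℝ) :
    meshCount2 δ (Gr1 h) = ((fun x => (⌊x / δ⌋, ⌊h x / δ⌋)) '' Icc 0 1).ncard := by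
  unfold meshCount2 Gr1
  congr 1
  ext ⟨a, c⟩
  simp only [Set.Nonempty, mem_inter_iff, mem_ofPred_eq, mem_prod, mem_image, Prod.mk.injEq,
    floor_div_eq_iff_mem_Ico hδ, Prod.exists]
  constructor
  · rintro ⟨x, _, ⟨hx, rfl⟩, hxa, hc⟩
    exact ⟨x, hx, hxa, hc⟩
  · rintro ⟨x, hx, hxa, hc⟩
    exact ⟨x, h x, ⟨hx, rfl⟩, hxa, hc⟩

lemma meshCount3_Gr2 {δ : ℝ} (hδ : 0 < δ) (F : ℝ → ℝ → ℝ) :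
    meshCount3 δ (Gr2 F) = ((fun p : ℝ × ℝ => (⌊p.1 / δ⌋, ⌊p.2 / δ⌋, ⌊F p.1 p.2 / δ⌋)) ''
      Icc 0 1 ×ˢ Icc 0 1).ncard := by
  unfold meshCount3 Gr2
  congr 1
  ext ⟨a, b, c⟩
  simp only [Set.Nonempty, mem_inter_iff, mem_ofPred_eq, mem_prod, mem_image, Prod.mk.injEq,
    floor_div_eq_iff_mem_Ico hδ, Prod.exists]
  constructor
  · rintro ⟨x, y, _, ⟨hx, hy, rfl⟩, hxa, hyb, hc⟩
    exact ⟨x, y, ⟨hx, hy⟩, hxa, hyb, hc⟩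
  · rintro ⟨x, y, ⟨hx, hy⟩, hxa, hyb, hc⟩
    exact ⟨x, y, F x y, ⟨hx, hy, rfl⟩, hxa, hyb, hc⟩

theorem Set.ncard_eq_sum_ncard_fiber {α β : Type*} [DecidableEq α] {S : Set (α × β)}
    (hS : S.Finite) {s : Finset α} (hs : ∀ p ∈ S, p.1 ∈ s) :
    S.ncard = ∑ a ∈ s, {b | (a, b) ∈ S}.ncard := by
  rw [ncard_eq_toFinset_card S hS, Finset.card_eq_sum_card_fiberwise (f := Prod.fst)
    (fun p hp => hs p (by simpa using hp))]
  refine Finset.sum_congr rfl fun a _ => ?_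
  rw [← ncard_coe_finset,
    ← ncard_image_of_injective {b | (a, b) ∈ S} (Prod.mk_right_injective a)]
  congr 1
  ext ⟨a', b⟩
  simp only [Finset.coe_filter, Finite.mem_toFinset, mem_ofPred_eq, mem_image, Prod.mk.injEq]
  grind

theorem Set.ncard_le_sum_ncard_fiber {α β : Type*} [DecidableEq α] (S : Set (α × β))
    {s : Finset α} (hs : ∀ p ∈ S, p.1 ∈ s) :
    S.ncard ≤ ∑ a ∈ s, {b | (a, b) ∈ S}.ncard := by
  by_cases hS : S.Finite
  · exact (ncard_eq_sum_ncard_fiber hS hs).le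
  · simp [Infinite.ncard hS]

lemma Int.cast_card_Icc_of_le {a b : ℤ} (h : a ≤ b + 1) :
    ((Finset.Icc a b).card : ℝ) = b + 1 - a := by
  exact_mod_cast Int.card_Icc_of_le a b h

lemma ncard_le_of_subset_image_floor_closedBall {S : Set ℤ} {u r : ℝ} (hr : 0 ≤ r)
    (hS : S ⊆ (fun t : ℝ => ⌊t⌋) '' Metric.closedBall u r) : (S.ncard : ℝ) ≤ 2 * r + 2 := by
  have hsub : S ⊆ ↑(Finset.Icc ⌊u - r⌋ ⌊u + r⌋) := by
    rintro c hc
    obtain ⟨t, ht, rfl⟩ := hS hc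
    rw [Metric.mem_closedBall, Real.dist_eq, abs_le] at ht
    simp only [Finset.coe_Icc, mem_Icc]
    exact ⟨Int.floor_mono (by linarith), Int.floor_mono (by linarith)⟩
  calc (S.ncard : ℝ) ≤ (Finset.Icc ⌊u - r⌋ ⌊u + r⌋).card := by
        exact_mod_cast (ncard_le_ncard hsub (Finset.finite_toSet _)).trans_eq (ncard_coe_finset _)
    _ = ⌊u + r⌋ + 1 - ⌊u - r⌋ :=
        Int.cast_card_Icc_of_le (by linarith [Int.floor_mono (show u - r ≤ u + r by linarith)])
    _ ≤ 2 * r + 2 := by linarith [Int.floor_le (u + r), Int.sub_one_lt_floor (u - r)]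

lemma sub_lt_ncard_image_floor {T : Set ℝ} (hT : T.OrdConnected)
    (hfin : ((fun t : ℝ => ⌊t⌋) '' T).Finite) {s t : ℝ} (hs : s ∈ T) (ht : t ∈ T) :
    t - s < ((fun t : ℝ => ⌊t⌋) '' T).ncard := by
  rcases lt_or_ge t s with hts | hst
  · exact (sub_neg.2 hts).trans_le (Nat.cast_nonneg _)
  have hsub : ↑(Finset.Icc ⌊s⌋ ⌊t⌋) ⊆ (fun t : ℝ => ⌊t⌋) '' T := by
    intro c hc
    simp only [Finset.coe_Icc, mem_Icc] at hc
    refine ⟨max c s, hT.out hs ht ⟨le_max_right _ _, max_le ?_ hst⟩, ?_⟩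
    · exact (Int.cast_le.2 hc.2).trans (Int.floor_le t)
    · rcases le_total (c : ℝ) s with hcs | hsc
      · simp only [max_eq_right hcs]
        exact le_antisymm hc.1 (Int.le_floor.2 hcs)
      · simp only [max_eq_left hsc, Int.floor_intCast]
  have hcard : ((Finset.Icc ⌊s⌋ ⌊t⌋).card : ℝ) ≤ ((fun t : ℝ => ⌊t⌋) '' T).ncard := by
    exact_mod_cast (ncard_coe_finset _).symm.trans_le (ncard_le_ncard hsub hfin)
  rw [Int.cast_card_Icc_of_le (by linarith [Int.floor_mono hst])] at hcard
  linarith [Int.floor_le s, Int.lt_floor_add_one t]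

def column (δ : ℝ) (a : ℤ) : Set ℝ := {x ∈ Icc (0 : ℝ) 1 | ⌊x / δ⌋ = a}

noncomputable def columnIdx (δ : ℝ) : Finset ℤ := Finset.Icc 0 ⌊δ⁻¹⌋

def graphRows (δ : ℝ) (h : ℝ → ℝ) (a : ℤ) : Set ℤ := (fun x => ⌊h x / δ⌋) '' column δ a

section column

variable {δ : ℝ} {a : ℤ}

lemma mem_columnIdx_of_mem_column (hδ : 0 < δ) {x : ℝ} (hx : x ∈ column δ a) :
    a ∈ columnIdx δ := by
  obtain ⟨⟨hx0, hx1⟩, rfl⟩ := hx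
  exact Finset.mem_Icc.2 ⟨Int.floor_nonneg.2 (div_nonneg hx0 hδ.le),
    Int.floor_mono (by rw [div_eq_mul_inv]; exact mul_le_of_le_one_left (by positivity) hx1)⟩

lemma column_nonempty (hδ : 0 < δ) (ha : a ∈ columnIdx δ) : (column δ a).Nonempty := by
  obtain ⟨ha0, ha1⟩ := Finset.mem_Icc.1 ha
  refine ⟨a * δ, ⟨by positivity, ?_⟩, by simp [hδ.ne']⟩
  calc (a : ℝ) * δ ≤ δ⁻¹ * δ := by
        gcongr; exact (Int.cast_le.2 ha1).trans (Int.floor_le _)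
    _ = 1 := inv_mul_cancel₀ hδ.ne'

lemma column_ordConnected (hδ : 0 < δ) : (column δ a).OrdConnected := by
  refine ⟨fun x hx y hy z hz => ⟨ordConnected_Icc.out hx.1 hy.1 hz, le_antisymm ?_ ?_⟩⟩
  · exact hy.2 ▸ Int.floor_mono (div_le_div_of_nonneg_right hz.2 hδ.le)
  · exact hx.2 ▸ Int.floor_mono (div_le_div_of_nonneg_right hz.1 hδ.le)

lemma abs_sub_le_of_mem_column (hδ : 0 < δ) {x x' : ℝ} (hx : x ∈ column δ a)
    (hx' : x' ∈ column δ a) : |x - x'| ≤ δ := by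
  have h := (floor_div_eq_iff_mem_Ico hδ).1 hx.2
  have h' := (floor_div_eq_iff_mem_Ico hδ).1 hx'.2
  rw [abs_sub_le_iff]
  constructor <;> linarith [h.1, h.2, h'.1, h'.2]

lemma card_columnIdx (hδ : 0 < δ) : ((columnIdx δ).card : ℝ) = ⌊δ⁻¹⌋ + 1 := by
  rw [columnIdx, Int.cast_card_Icc_of_le (by linarith [Int.floor_nonneg.2 (inv_nonneg.2 hδ.le)]),
    Int.cast_zero, sub_zero]

lemma card_columnIdx_le (hδ : 0 < δ) (hδ1 : δ ≤ 1) : ((columnIdx δ).card : ℝ) ≤ 2 * δ⁻¹ := by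
  rw [card_columnIdx hδ]
  linarith [Int.floor_le δ⁻¹, one_le_inv₀ hδ |>.2 hδ1]

end column

lemma IsCompact.finite_image_floor_div {s : Set ℝ} (hs : IsCompact s) {δ : ℝ} {h : ℝ → ℝ}
    (hh : ContinuousOn h s) : ((fun x => ⌊h x / δ⌋) '' s).Finite := by
  have hK := hs.image_of_continuousOn (hh.div_const δ)
  obtain ⟨lo, hlo⟩ := hK.bddBelow
  obtain ⟨hi, hhi⟩ := hK.bddAbove
  refine (finite_Icc ⌊lo⌋ ⌊hi⌋).subset ?_
  rintro _ ⟨x, hx, rfl⟩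
  exact ⟨Int.floor_mono (hlo ⟨x, hx, rfl⟩), Int.floor_mono (hhi ⟨x, hx, rfl⟩)⟩

def ColumnOscLE (δ : ℝ) (h : ℝ → ℝ) (P : ℤ → ℝ) : Prop :=
  ∀ a, ∀ x ∈ column δ a, ∀ x' ∈ column δ a, |h x - h x'| ≤ δ * P a

namespace ColumnOscLE

variable {δ : ℝ} {h : ℝ → ℝ} {P : ℤ → ℝ}

lemma nonneg (hP : ColumnOscLE δ h P) (hδ : 0 < δ) {a : ℤ} (ha : a ∈ columnIdx δ) :
    0 ≤ P a := by
  obtain ⟨x, hx⟩ := column_nonempty hδ ha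
  have hxx := hP a x hx x hx
  rw [sub_self, abs_zero] at hxx
  exact nonneg_of_mul_nonneg_right hxx hδ

lemma mul_of_lipschitzOnWith (hP : ColumnOscLE δ h P) (hδ : 0 < δ) {lam : ℝ → ℝ} {Λ B : ℝ}
    {K : ℝ≥0} (hlam : ∀ x ∈ Icc (0 : ℝ) 1, |lam x| ≤ Λ) (hB : ∀ x ∈ Icc (0 : ℝ) 1, |h x| ≤ B)
    (hlip : LipschitzOnWith K lam (Icc 0 1)) :
    ColumnOscLE δ (fun x => lam x * h x) (fun a => Λ * P a + B * K) := by
  intro a x hx x' hx'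
  have hlam_sub : |lam x - lam x'| ≤ K * δ := by
    have hdist := hlip.dist_le_mul x hx.1 x' hx'.1
    rw [Real.dist_eq, Real.dist_eq] at hdist
    exact hdist.trans (by gcongr; exact abs_sub_le_of_mem_column hδ hx hx')
  have hΛ : 0 ≤ Λ := (abs_nonneg _).trans (hlam x hx.1)
  calc |lam x * h x - lam x' * h x'| = |lam x * (h x - h x') + (lam x - lam x') * h x'| := by
        ring_nf
    _ ≤ |lam x| * |h x - h x'| + |lam x - lam x'| * |h x'| := by
        rw [← abs_mul, ← abs_mul]; exact abs_add_le _ _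
    _ ≤ Λ * (δ * P a) + K * δ * B := by
        gcongr
        · exact hlam x hx.1
        · exact hP a x hx x' hx'
        · exact hB x' hx'.1
    _ = δ * (Λ * P a + B * K) := by ring

lemma sum {ι : Type*} (s : Finset ι) {u : ι → ℝ → ℝ} {Q : ι → ℤ → ℝ}
    (hu : ∀ i ∈ s, ColumnOscLE δ (u i) (Q i)) :
    ColumnOscLE δ (fun x => ∑ i ∈ s, u i x) (fun a => ∑ i ∈ s, Q i a) := by
  intro a x hx x' hx'
  rw [← Finset.sum_sub_distrib, Finset.mul_sum]
  exact (Finset.abs_sum_le_sum_abs _ _).trans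
    (Finset.sum_le_sum fun i hi => hu i hi a x hx x' hx')

end ColumnOscLE

/-- By the intermediate value theorem, the graph of `h` over a column meets every mesh row
between those of `h x` and `h x'`. -/
lemma columnOscLE_graphRows {δ : ℝ} (hδ : 0 < δ) {h : ℝ → ℝ} (hh : ContinuousOn h (Icc 0 1)) :
    ColumnOscLE δ h (fun a => (graphRows δ h a).ncard) := by
  intro a x hx x' hx'
  set T := (fun x => h x / δ) '' column δ a
  have hT : T.OrdConnected := IsPreconnected.ordConnected <|
    (column_ordConnected hδ).isPreconnected.image _ ((hh.div_const δ).mono fun y hy => hy.1)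
  have hrows : graphRows δ h a = (fun t : ℝ => ⌊t⌋) '' T := (image_image _ _ _).symm
  have hfin : ((fun t : ℝ => ⌊t⌋) '' T).Finite := by
    rw [← hrows]
    exact (isCompact_Icc.finite_image_floor_div hh).subset (image_mono fun y hy => hy.1)
  have key : |h x / δ - h x' / δ| < (graphRows δ h a).ncard := by
    rw [hrows, abs_sub_lt_iff]
    exact ⟨sub_lt_ncard_image_floor hT hfin (mem_image_of_mem _ hx') (mem_image_of_mem _ hx),
      sub_lt_ncard_image_floor hT hfin (mem_image_of_mem _ hx) (mem_image_of_mem _ hx')⟩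
  rw [← sub_div, abs_div, abs_of_pos hδ, div_lt_iff₀ hδ] at key
  linarith

section graph

variable {δ : ℝ} {h : ℝ → ℝ}

lemma meshCount2_Gr1_eq_sum_s14 (hδ : 0 < δ) (hh : ContinuousOn h (Icc 0 1)) :
    meshCount2 δ (Gr1 h) = ∑ a ∈ columnIdx δ, (graphRows δ h a).ncard := by
  rw [meshCount2_Gr1 hδ]
  have hsub : (fun x => (⌊x / δ⌋, ⌊h x / δ⌋)) '' Icc 0 1 ⊆
      ↑(columnIdx δ) ×ˢ ((fun x => ⌊h x / δ⌋) '' Icc 0 1) := by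
    rintro _ ⟨x, hx, rfl⟩
    exact ⟨mem_columnIdx_of_mem_column hδ ⟨hx, rfl⟩, mem_image_of_mem _ hx⟩
  rw [ncard_eq_sum_ncard_fiber (((Finset.finite_toSet _).prod
    (isCompact_Icc.finite_image_floor_div hh)).subset hsub) fun p hp => (hsub hp).1]
  refine Finset.sum_congr rfl fun a _ => congrArg ncard ?_
  ext c
  simp [graphRows, column, and_assoc]

lemma inv_lt_meshCount2_Gr1 (hδ : 0 < δ) (hh : ContinuousOn h (Icc 0 1)) :
    δ⁻¹ < meshCount2 δ (Gr1 h) := by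
  have hrows : ∀ a ∈ columnIdx δ, 1 ≤ (graphRows δ h a).ncard := fun a ha =>
    (ncard_pos ((isCompact_Icc.finite_image_floor_div hh).subset
      (image_mono fun x hx => hx.1))).2 ((column_nonempty hδ ha).image _)
  have hcount : (columnIdx δ).card ≤ meshCount2 δ (Gr1 h) := by
    rw [meshCount2_Gr1_eq_sum_s14 hδ hh, Finset.card_eq_sum_ones]
    exact Finset.sum_le_sum hrows
  calc δ⁻¹ < ⌊δ⁻¹⌋ + 1 := Int.lt_floor_add_one _
    _ = (columnIdx δ).card := (card_columnIdx hδ).symm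
    _ ≤ meshCount2 δ (Gr1 h) := by exact_mod_cast hcount

lemma one_le_of_hasBoxDim2_Gr1 (hh : ContinuousOn h (Icc 0 1)) {D : ℝ}
    (hD : HasBoxDim2 (Gr1 h) D) : 1 ≤ D := by
  refine ge_of_tendsto hD ?_
  filter_upwards [Ioo_mem_nhdsGT one_pos] with δ ⟨hδ0, hδ1⟩
  have hlog : 0 < -Real.log δ := neg_pos.2 (Real.log_neg hδ0 hδ1)
  rw [le_div_iff₀ hlog, one_mul, ← Real.log_inv]
  exact Real.log_le_log (inv_pos.2 hδ0) (inv_lt_meshCount2_Gr1 hδ0 hh).le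

end graph

lemma meshCount3_Gr2_add_le_s14 {δ : ℝ} (hδ : 0 < δ) {h k : ℝ → ℝ} {P Q : ℤ → ℝ}
    (hP : ColumnOscLE δ h P) (hQ : ColumnOscLE δ k Q) :
    (meshCount3 δ (Gr2 fun x y => h x + k y) : ℝ) ≤
      ∑ a ∈ columnIdx δ, ∑ b ∈ columnIdx δ, (2 * (P a + Q b) + 2) := by
  rw [meshCount3_Gr2 hδ]
  set S := (fun p : ℝ × ℝ => (⌊p.1 / δ⌋, ⌊p.2 / δ⌋, ⌊(h p.1 + k p.2) / δ⌋)) ''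
    Icc 0 1 ×ˢ Icc 0 1
  have hS : ∀ p ∈ S, p.1 ∈ columnIdx δ ∧ p.2.1 ∈ columnIdx δ := by
    rintro _ ⟨⟨x, y⟩, ⟨hx, hy⟩, rfl⟩
    exact ⟨mem_columnIdx_of_mem_column hδ ⟨hx, rfl⟩, mem_columnIdx_of_mem_column hδ ⟨hy, rfl⟩⟩
  have hfiber : ∀ a ∈ columnIdx δ, ∀ b ∈ columnIdx δ,
      ({c | (b, c) ∈ {bc | (a, bc) ∈ S}}.ncard : ℝ) ≤ 2 * (P a + Q b) + 2 := by
    intro a ha b hb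
    obtain ⟨x₀, hx₀⟩ := column_nonempty hδ ha
    obtain ⟨y₀, hy₀⟩ := column_nonempty hδ hb
    refine ncard_le_of_subset_image_floor_closedBall (u := (h x₀ + k y₀) / δ)
      (add_nonneg (hP.nonneg hδ ha) (hQ.nonneg hδ hb)) ?_
    rintro c ⟨⟨x, y⟩, ⟨hx, hy⟩, hxy⟩
    simp only [Prod.mk.injEq] at hxy
    obtain ⟨hxa, hyb, rfl⟩ := hxy
    refine ⟨(h x + k y) / δ, ?_, rfl⟩
    rw [Metric.mem_closedBall, Real.dist_eq, ← sub_div, abs_div, abs_of_pos hδ, div_le_iff₀ hδ]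
    calc |h x + k y - (h x₀ + k y₀)| ≤ |h x - h x₀| + |k y - k y₀| := by
          rw [add_sub_add_comm]; exact abs_add_le _ _
      _ ≤ δ * P a + δ * Q b :=
          add_le_add (hP a x ⟨hx, hxa⟩ x₀ hx₀) (hQ b y ⟨hy, hyb⟩ y₀ hy₀)
      _ = (P a + Q b) * δ := by ring
  calc (S.ncard : ℝ)
      ≤ ∑ a ∈ columnIdx δ, ∑ b ∈ columnIdx δ, ({c | (b, c) ∈ {bc | (a, bc) ∈ S}}.ncard : ℝ) := by
        exact_mod_cast (ncard_le_sum_ncard_fiber S fun p hp => (hS p hp).1).trans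
          (Finset.sum_le_sum fun a _ => ncard_le_sum_ncard_fiber _ fun p hp => (hS _ hp).2)
    _ ≤ _ := Finset.sum_le_sum fun a ha => Finset.sum_le_sum fun b hb => hfiber a ha b hb

lemma IsCompact.exists_abs_le_of_continuousOn {s : Set ℝ} (hs : IsCompact s) {h : ℝ → ℝ}
    (hh : ContinuousOn h s) : ∃ B, 0 ≤ B ∧ ∀ x ∈ s, |h x| ≤ B := by
  obtain ⟨B, hB⟩ := hs.exists_bound_of_continuousOn hh
  exact ⟨max B 0, le_max_right _ _, fun x hx => (hB x hx).trans (le_max_left _ _)⟩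

lemma exists_columnOscLE_sum_mul {ι : Type*} [Fintype ι] {f lam : ι → ℝ → ℝ}
    (hf : ∀ i, ContinuousOn (f i) (Icc 0 1))
    (hlam : ∀ i, ∃ K : ℝ≥0, LipschitzOnWith K (lam i) (Icc 0 1)) :
    ∃ A C : ℝ, 0 ≤ A ∧ 0 ≤ C ∧ ∀ δ, 0 < δ → ∃ P : ℤ → ℝ,
      ColumnOscLE δ (fun x => ∑ i, lam i x * f i x) P ∧
      ∀ R, (∀ i, (meshCount2 δ (Gr1 (f i)) : ℝ) ≤ R) →
        ∑ a ∈ columnIdx δ, P a ≤ A * R + C * (columnIdx δ).card := by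
  choose K hK using hlam
  choose Λ hΛ0 hΛ using fun i =>
    isCompact_Icc.exists_abs_le_of_continuousOn (hK i).continuousOn
  choose B hB0 hB using fun i => isCompact_Icc.exists_abs_le_of_continuousOn (hf i)
  refine ⟨∑ i, Λ i, ∑ i, B i * K i, Finset.sum_nonneg fun i _ => hΛ0 i,
    Finset.sum_nonneg fun i _ => mul_nonneg (hB0 i) (K i).coe_nonneg, fun δ hδ =>
    ⟨fun a => ∑ i, (Λ i * (graphRows δ (f i) a).ncard + B i * K i),
      ColumnOscLE.sum _ fun i _ => (columnOscLE_graphRows hδ (hf i)).mul_of_lipschitzOnWith hδ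
        (hΛ i) (hB i) (hK i), fun R hR => ?_⟩⟩
  calc ∑ a ∈ columnIdx δ, ∑ i, (Λ i * (graphRows δ (f i) a).ncard + B i * K i)
      = ∑ i, Λ i * meshCount2 δ (Gr1 (f i)) + (∑ i, B i * K i) * (columnIdx δ).card := by
        simp only [Finset.sum_comm (s := columnIdx δ), Finset.sum_add_distrib, ← Finset.mul_sum,
          meshCount2_Gr1_eq_sum_s14 hδ (hf _), Nat.cast_sum, Finset.sum_const, nsmul_eq_mul,
          Finset.sum_mul]
        exact congrArg _ (Finset.sum_congr rfl fun i _ => by ring)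
    _ ≤ ∑ i, Λ i * R + (∑ i, B i * K i) * (columnIdx δ).card := by
        gcongr with i
        exacts [hΛ0 i, hR i]
    _ = (∑ i, Λ i) * R + (∑ i, B i * K i) * (columnIdx δ).card := by rw [← Finset.sum_mul]

lemma exists_meshCount3_Gr2_le_rpow {ι κ : Type*} [Fintype ι] [Fintype κ]
    {f lam : ι → ℝ → ℝ} {g mu : κ → ℝ → ℝ}
    (hf : ∀ i, ContinuousOn (f i) (Icc 0 1)) (hg : ∀ j, ContinuousOn (g j) (Icc 0 1))
    (hlam : ∀ i, ∃ K : ℝ≥0, LipschitzOnWith K (lam i) (Icc 0 1))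
    (hmu : ∀ j, ∃ K : ℝ≥0, LipschitzOnWith K (mu j) (Icc 0 1)) :
    ∃ C : ℝ, ∀ t : ℝ, 1 ≤ t → ∀ δ, 0 < δ → δ ≤ 1 →
      (∀ i, (meshCount2 δ (Gr1 (f i)) : ℝ) ≤ δ ^ (-t)) →
      (∀ j, (meshCount2 δ (Gr1 (g j)) : ℝ) ≤ δ ^ (-t)) →
      (meshCount3 δ (Gr2 fun x y => (∑ i, lam i x * f i x) + ∑ j, mu j y * g j y) : ℝ) ≤
        C * δ ^ (-(1 + t)) := by
  obtain ⟨A, C, hA, hC, hP⟩ := exists_columnOscLE_sum_mul hf hlam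
  obtain ⟨A', C', hA', hC', hQ⟩ := exists_columnOscLE_sum_mul hg hmu
  refine ⟨4 * (A + A') + 4 * (2 * (C + C') + 2), fun t ht δ hδ hδ1 hfδ hgδ => ?_⟩
  obtain ⟨P, hPosc, hPsum⟩ := hP δ hδ
  obtain ⟨Q, hQosc, hQsum⟩ := hQ δ hδ
  set n : ℝ := ((columnIdx δ).card : ℝ)
  set R := δ ^ (-t)
  have hn : n ≤ 2 * δ⁻¹ := card_columnIdx_le hδ hδ1
  have hR : δ⁻¹ * R = δ ^ (-(1 + t)) := by
    rw [← Real.rpow_neg_one, ← Real.rpow_add hδ, neg_add]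
  have hsq : δ⁻¹ * δ⁻¹ ≤ δ ^ (-(1 + t)) := by
    rw [← Real.rpow_neg_one, ← Real.rpow_add hδ]
    exact Real.rpow_le_rpow_of_exponent_ge hδ hδ1 (by linarith)
  have hsum : ∑ a ∈ columnIdx δ, ∑ b ∈ columnIdx δ, (2 * (P a + Q b) + 2) =
      2 * n * (∑ a ∈ columnIdx δ, P a + ∑ b ∈ columnIdx δ, Q b) + 2 * n * n := by
    simp only [Finset.sum_add_distrib, ← Finset.mul_sum, Finset.sum_const, nsmul_eq_mul,
      mul_add]
    ring
  calc (meshCount3 δ (Gr2 fun x y => (∑ i, lam i x * f i x) + ∑ j, mu j y * g j y) : ℝ)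
      ≤ ∑ a ∈ columnIdx δ, ∑ b ∈ columnIdx δ, (2 * (P a + Q b) + 2) :=
        meshCount3_Gr2_add_le_s14 hδ hPosc hQosc
    _ ≤ 2 * n * ((A + A') * R + (C + C') * n) + 2 * n * n := by
        rw [hsum]
        gcongr 2 * n * ?_ + _
        linarith [hPsum R hfδ, hQsum R hgδ]
    _ = 2 * (A + A') * (n * R) + (2 * (C + C') + 2) * (n * n) := by ring
    _ ≤ 2 * (A + A') * (2 * δ⁻¹ * R) + (2 * (C + C') + 2) * (2 * δ⁻¹ * (2 * δ⁻¹)) := by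
        gcongr
    _ = 4 * (A + A') * (δ⁻¹ * R) + 4 * (2 * (C + C') + 2) * (δ⁻¹ * δ⁻¹) := by ring
    _ ≤ 4 * (A + A') * δ ^ (-(1 + t)) + 4 * (2 * (C + C') + 2) * δ ^ (-(1 + t)) := by
        rw [hR]; gcongr
    _ = (4 * (A + A') + 4 * (2 * (C + C') + 2)) * δ ^ (-(1 + t)) := by ring

lemma HasBoxDim2.eventually_meshCount2_le_rpow {A : Set (ℝ × ℝ)} {D t : ℝ}
    (hA : HasBoxDim2 A D) (ht : D < t) : ∀ᶠ δ in 𝓝[>] 0, (meshCount2 δ A : ℝ) ≤ δ ^ (-t) := by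
  filter_upwards [hA.eventually (gt_mem_nhds ht), Ioo_mem_nhdsGT one_pos] with δ hδ ⟨hδ0, hδ1⟩
  have hlog : 0 < -Real.log δ := neg_pos.2 (Real.log_neg hδ0 hδ1)
  rcases (Nat.cast_nonneg (meshCount2 δ A) : (0 : ℝ) ≤ _).eq_or_lt with h0 | hpos
  · rw [← h0]; positivity
  · rw [← Real.log_le_log_iff hpos (by positivity), Real.log_rpow hδ0]
    rw [div_lt_iff₀ hlog] at hδ
    linarith

lemma limsup_log_div_neg_log_le {n : ℝ → ℕ} {s₀ : ℝ} (hs₀ : 0 ≤ s₀)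
    (h : ∀ s > s₀, ∃ C, ∀ᶠ δ in 𝓝[>] 0, (n δ : ℝ) ≤ C * δ ^ (-s)) :
    limsup (fun δ => Real.log (n δ) / -Real.log δ) (𝓝[>] 0) ≤ s₀ := by
  refine le_of_forall_gt_imp_ge_of_dense fun s hs => ?_
  obtain ⟨C, hC⟩ := h s hs
  -- `C' ≥ 1` keeps the bound valid where `n δ = 0`, i.e. where `Real.log (n δ) = 0`.
  set C' := max C 1
  have hlim : Tendsto (fun δ => Real.log C' / -Real.log δ + s) (𝓝[>] 0) (𝓝 s) := by
    simpa using (tendsto_const_nhds.div_atTop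
      (tendsto_neg_atBot_atTop.comp Real.tendsto_log_nhdsGT_zero)).add_const s
  refine (limsup_le_limsup ?_ ?_ hlim.isBoundedUnder_le).trans hlim.limsup_eq.le
  · filter_upwards [hC, Ioo_mem_nhdsGT one_pos] with δ hδ ⟨hδ0, hδ1⟩
    have hlog : 0 < -Real.log δ := neg_pos.2 (Real.log_neg hδ0 hδ1)
    rw [div_le_iff₀ hlog, add_mul, div_mul_cancel₀ _ hlog.ne', mul_neg, ← neg_mul,
      ← Real.log_rpow hδ0, ← Real.log_mul (by positivity) (by positivity)]
    rcases (Nat.cast_nonneg (n δ) : (0 : ℝ) ≤ _).eq_or_lt with h0 | hpos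
    · rw [← h0, Real.log_zero]
      exact Real.log_nonneg (one_le_mul_of_one_le_of_one_le (le_max_right _ _)
        (Real.one_le_rpow_of_pos_of_le_one_of_nonpos hδ0 hδ1.le (by linarith)))
    · exact Real.log_le_log hpos (hδ.trans (by gcongr; exact le_max_left _ _))
  · refine isCoboundedUnder_le_of_eventually_le _ (x := 0) ?_
    filter_upwards [Ioo_mem_nhdsGT one_pos] with δ ⟨hδ0, hδ1⟩
    exact div_nonneg (Real.log_natCast_nonneg _) (neg_nonneg.2 (Real.log_nonpos hδ0.le hδ1.le))

theorem stmt14_general (N M : ℕ) (hN : 0 < N)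
    (f : Fin N → ℝ → ℝ) (g : Fin M → ℝ → ℝ)
    (lam : Fin N → ℝ → ℝ) (mu : Fin M → ℝ → ℝ)
    (hf : ∀ i, ContinuousOn (f i) (Icc 0 1)) (hg : ∀ j, ContinuousOn (g j) (Icc 0 1))
    (hliplam : ∀ i, ∃ K : NNReal, LipschitzOnWith K (lam i) (Icc 0 1))
    (hlipmu : ∀ j, ∃ K : NNReal, LipschitzOnWith K (mu j) (Icc 0 1))
    (Df : Fin N → ℝ) (Dg : Fin M → ℝ)
    (hDf : ∀ i, HasBoxDim2 (Gr1 (f i)) (Df i))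
    (hDg : ∀ j, HasBoxDim2 (Gr1 (g j)) (Dg j)) :
    limsup (fun δ : ℝ =>
        Real.log (meshCount3 δ
          (Gr2 fun x y => (∑ i, lam i x * f i x) + ∑ j, mu j y * g j y)) / (-Real.log δ))
      (𝓝[>] 0) ≤ 1 + max (⨆ i, Df i) (⨆ j, Dg j) := by
  obtain ⟨C, hC⟩ := exists_meshCount3_Gr2_le_rpow hf hg hliplam hlipmu
  set D := max (⨆ i, Df i) (⨆ j, Dg j)
  have hDf_le (i : Fin N) : Df i ≤ D :=
    (le_ciSup (finite_range Df).bddAbove i).trans (le_max_left _ _)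
  have hDg_le (j : Fin M) : Dg j ≤ D :=
    (le_ciSup (finite_range Dg).bddAbove j).trans (le_max_right _ _)
  have hD : 1 ≤ D := (one_le_of_hasBoxDim2_Gr1 (hf ⟨0, hN⟩) (hDf ⟨0, hN⟩)).trans (hDf_le _)
  refine limsup_log_div_neg_log_le (by linarith) fun s hs => ⟨C, ?_⟩
  have hfs : ∀ᶠ δ in 𝓝[>] 0, ∀ i, (meshCount2 δ (Gr1 (f i)) : ℝ) ≤ δ ^ (-(s - 1)) :=
    eventually_all.2 fun i => (hDf i).eventually_meshCount2_le_rpow (by linarith [hDf_le i])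
  have hgs : ∀ᶠ δ in 𝓝[>] 0, ∀ j, (meshCount2 δ (Gr1 (g j)) : ℝ) ≤ δ ^ (-(s - 1)) :=
    eventually_all.2 fun j => (hDg j).eventually_meshCount2_le_rpow (by linarith [hDg_le j])
  filter_upwards [hfs, hgs, Ioo_mem_nhdsGT one_pos] with δ hfδ hgδ ⟨hδ0, hδ1⟩
  simpa using hC (s - 1) (by linarith) δ hδ0 hδ1.le hfδ hgδ

/-- **Corollary 1 (upper bound).** For continuous `f_i, g_j : [0,1] → ℝ` with box-counting
dimensional graphs and Lipschitz `λ_i, μ_j : [0,1] → ℝ`, the upper box-counting dimension of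
the graph of `F(x,y) = Σ λ_i(x)f_i(x) + Σ μ_j(y)g_j(y)` is at most
`1 + max_{i,j}{dim_B Gr(f_i), dim_B Gr(g_j)}`. -/
theorem stmt14 (N M : ℕ) (hN : 0 < N) (hM : 0 < M)
    (f : Fin N → ℝ → ℝ) (g : Fin M → ℝ → ℝ)
    (lam : Fin N → ℝ → ℝ) (mu : Fin M → ℝ → ℝ)
    (hf : ∀ i, ContinuousOn (f i) (Icc 0 1)) (hg : ∀ j, ContinuousOn (g j) (Icc 0 1))
    (hliplam : ∀ i, ∃ K : NNReal, LipschitzOnWith K (lam i) (Icc 0 1))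
    (hlipmu : ∀ j, ∃ K : NNReal, LipschitzOnWith K (mu j) (Icc 0 1))
    (Df : Fin N → ℝ) (Dg : Fin M → ℝ)
    (hDf : ∀ i, HasBoxDim2 (Gr1 (f i)) (Df i))
    (hDg : ∀ j, HasBoxDim2 (Gr1 (g j)) (Dg j)) :
    limsup (fun δ : ℝ =>
        Real.log (meshCount3 δ
          (Gr2 fun x y => (∑ i, lam i x * f i x) + ∑ j, mu j y * g j y)) / (-Real.log δ))
      (𝓝[>] 0) ≤ 1 + max (⨆ i, Df i) (⨆ j, Dg j) :=
  stmt14_general N M hN f g lam mu hf hg hliplam hlipmu Df Dg hDf hDg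
end
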